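/- arXiv:0805.0205 — 3 statements merged into one kernel-verified Lean document; each statement's English description precedes it below -/
import Mathlib

section
/- Let T > 0, let λ ∈ ℝ, and let u be a classical solution of the critical nonlinear wave equation that is spatially compactly supported on [−T,T]. Let ψ : ℝⁿ → ℝ be four times continuously differentiable. Then the Morawetz multiplier identity holds: ∫_{−T}^{T} ∫_{ℝⁿ} ( D²ψ(x)[∇ₓu(t,x), ∇ₓu(t,x)] − (1/4) u(t,x)² Δ²ψ(x) + (λ/n) |u(t,x)|^{2*} Δψ(x) ) dx dt = − ∫_{ℝⁿ} ( ∂ₜu(T,x) ⟨∇ₓu(T,x), ∇ψ(x)⟩ + (1/2) Δψ(x) ∂ₜu(T,x) u(T,x) ) dx + ∫_{ℝⁿ} ( ∂ₜu(−T,x) ⟨∇ₓu(−T,x), ∇ψ(x)⟩ + (1/2) Δψ(x) ∂ₜu(−T,x) u(−T,x) ) dx. -/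
open MeasureTheory Filter Topology Metric
open scoped RealInnerProductSpace

noncomputable section

/-- The critical exponent `2* = 2n/(n-2)`. -/
def twoStar (n : ℕ) : ℝ := 2 * n / ((n : ℝ) - 2)

/-- Time derivative. -/
def dtu {n : ℕ} (u : ℝ × EuclideanSpace ℝ (Fin n) → ℝ) (t : ℝ)
    (x : EuclideanSpace ℝ (Fin n)) : ℝ :=
  deriv (fun s => u (s, x)) t

/-- Second time derivative. -/
def dttu {n : ℕ} (u : ℝ × EuclideanSpace ℝ (Fin n) → ℝ) (t : ℝ)
    (x : EuclideanSpace ℝ (Fin n)) : ℝ :=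
  deriv (fun s => dtu u s x) t

/-- Spatial gradient. -/
def gradx {n : ℕ} (u : ℝ × EuclideanSpace ℝ (Fin n) → ℝ) (t : ℝ)
    (x : EuclideanSpace ℝ (Fin n)) : EuclideanSpace ℝ (Fin n) :=
  gradient (fun y => u (t, y)) x

/-- Laplacian of a function on Euclidean space, as the sum of the second partial
derivatives in the coordinate directions. -/
def lapl {n : ℕ} (f : EuclideanSpace ℝ (Fin n) → ℝ) (x : EuclideanSpace ℝ (Fin n)) : ℝ :=
  ∑ i : Fin n, fderiv ℝ (fun y => fderiv ℝ f y (EuclideanSpace.single i 1)) x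
    (EuclideanSpace.single i 1)

/-- Classical solution of the free wave equation: `u` is smooth and `∂ₜ²u = Δₓu`. -/
def IsFreeWave {n : ℕ} (u : ℝ × EuclideanSpace ℝ (Fin n) → ℝ) : Prop :=
  ContDiff ℝ (⊤ : ℕ∞) u ∧ ∀ t x, dttu u t x = lapl (fun y => u (t, y)) x

/-- Classical solution of the critical nonlinear wave equation:
`u` is smooth and `∂ₜ²u − Δₓu + λ|u|^{2*−2}u = 0`. -/
def IsCriticalNLW {n : ℕ} (lam : ℝ) (u : ℝ × EuclideanSpace ℝ (Fin n) → ℝ) : Prop :=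
  ContDiff ℝ (⊤ : ℕ∞) u ∧ ∀ t x,
    dttu u t x - lapl (fun y => u (t, y)) x
      + lam * |u (t, x)| ^ (twoStar n - 2) * u (t, x) = 0

/-- `u` is supported in a light cone: `u (t, x) = 0` whenever `‖x‖ ≥ R₀ + |t|`. -/
def InLightCone {n : ℕ} (u : ℝ × EuclideanSpace ℝ (Fin n) → ℝ) : Prop :=
  ∃ R₀ > 0, ∀ t x, R₀ + |t| ≤ ‖x‖ → u (t, x) = 0

/-- `u` is spatially compactly supported on the time interval `I`. -/
def SpatiallyCompactOn {n : ℕ} (u : ℝ × EuclideanSpace ℝ (Fin n) → ℝ) (I : Set ℝ) : Prop :=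
  ∃ R₀ > 0, ∀ t ∈ I, ∀ x : EuclideanSpace ℝ (Fin n), R₀ ≤ ‖x‖ → u (t, x) = 0

/-- Radial derivative `∂_{|x|} u (t, x) = ⟨∇ₓu(t,x), x/‖x‖⟩`. -/
def radialDeriv {n : ℕ} (u : ℝ × EuclideanSpace ℝ (Fin n) → ℝ) (t : ℝ)
    (x : EuclideanSpace ℝ (Fin n)) : ℝ :=
  ⟪gradx u t x, ‖x‖⁻¹ • x⟫

namespace MorawetzAux
open ContinuousLinearMap

variable {n : ℕ}

def ee (n : ℕ) (i : Fin n) : EuclideanSpace ℝ (Fin n) := EuclideanSpace.single i 1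

def Ut (u : ℝ × EuclideanSpace ℝ (Fin n) → ℝ) (p : ℝ × EuclideanSpace ℝ (Fin n)) : ℝ :=
  fderiv ℝ u p (1, 0)
def Ux (u : ℝ × EuclideanSpace ℝ (Fin n) → ℝ) (i : Fin n) (p : ℝ × EuclideanSpace ℝ (Fin n)) : ℝ :=
  fderiv ℝ u p (0, ee n i)
def Utt (u : ℝ × EuclideanSpace ℝ (Fin n) → ℝ) (p : ℝ × EuclideanSpace ℝ (Fin n)) : ℝ :=
  fderiv ℝ (Ut u) p (1, 0)
def Utx (u : ℝ × EuclideanSpace ℝ (Fin n) → ℝ) (i : Fin n) (p : ℝ × EuclideanSpace ℝ (Fin n)) : ℝ :=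
  fderiv ℝ (Ut u) p (0, ee n i)
def Uxx (u : ℝ × EuclideanSpace ℝ (Fin n) → ℝ) (i j : Fin n) (p : ℝ × EuclideanSpace ℝ (Fin n)) : ℝ :=
  fderiv ℝ (Ux u j) p (0, ee n i)

lemma smooth_clm {u : ℝ × EuclideanSpace ℝ (Fin n) → ℝ} (hu : ContDiff ℝ (⊤ : ℕ∞) u)
    (w : ℝ × EuclideanSpace ℝ (Fin n)) : ContDiff ℝ (⊤ : ℕ∞) (fun p => fderiv ℝ u p w) :=
  (hu.fderiv_right (by simp)).clm_apply contDiff_const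

lemma smooth_Ut {u : ℝ × EuclideanSpace ℝ (Fin n) → ℝ} (hu : ContDiff ℝ (⊤ : ℕ∞) u) :
    ContDiff ℝ (⊤ : ℕ∞) (Ut u) := smooth_clm hu _
lemma smooth_Ux {u : ℝ × EuclideanSpace ℝ (Fin n) → ℝ} (hu : ContDiff ℝ (⊤ : ℕ∞) u) (i : Fin n) :
    ContDiff ℝ (⊤ : ℕ∞) (Ux u i) := smooth_clm hu _

/-- the slice `y ↦ (t, y)` has derivative `inr`. -/
lemma hasFDerivAt_slice {F : ℝ × EuclideanSpace ℝ (Fin n) → ℝ} (hF : ContDiff ℝ (⊤ : ℕ∞) F)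
    (t : ℝ) (x : EuclideanSpace ℝ (Fin n)) :
    HasFDerivAt (fun y => F (t, y)) ((fderiv ℝ F (t, x)).comp (inr ℝ ℝ _)) x := by
  have h1 : HasFDerivAt (fun y : EuclideanSpace ℝ (Fin n) => (t, y)) (inr ℝ ℝ _) x :=
    (hasFDerivAt_const t x).prodMk (hasFDerivAt_id x)
  exact (hF.differentiable (by simp) (t, x)).hasFDerivAt.comp x h1

lemma hasDerivAt_curve {F : ℝ × EuclideanSpace ℝ (Fin n) → ℝ} (hF : ContDiff ℝ (⊤ : ℕ∞) F)
    (t : ℝ) (x : EuclideanSpace ℝ (Fin n)) :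
    HasDerivAt (fun s => F (s, x)) (fderiv ℝ F (t, x) (1, 0)) t := by
  have h1 : HasDerivAt (fun s : ℝ => (s, x)) ((1 : ℝ), (0 : EuclideanSpace ℝ (Fin n))) t :=
    (hasDerivAt_id t).prodMk (hasDerivAt_const t x)
  exact (hF.differentiable (by simp) (t, x)).hasFDerivAt.comp_hasDerivAt t h1

/-- symmetry of second derivatives -/
lemma sym2 {u : ℝ × EuclideanSpace ℝ (Fin n) → ℝ} (hu : ContDiff ℝ (⊤ : ℕ∞) u)
    (p : ℝ × EuclideanSpace ℝ (Fin n)) (v w : ℝ × EuclideanSpace ℝ (Fin n)) :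
    fderiv ℝ (fun q => fderiv ℝ u q v) p w = fderiv ℝ (fun q => fderiv ℝ u q w) p v := by
  have hd' : ContDiff ℝ (⊤ : ℕ∞) (fderiv ℝ u) := hu.fderiv_right (by simp)
  have hd : Differentiable ℝ (fderiv ℝ u) := hd'.differentiable (by simp)
  have e1 : ∀ z : ℝ × EuclideanSpace ℝ (Fin n),
      fderiv ℝ (fun q => fderiv ℝ u q z) p = (fderiv ℝ (fderiv ℝ u) p).flip z := by
    intro z
    have h := fderiv_clm_apply (hd p) (differentiableAt_const z)
    simpa using h
  rw [e1, e1]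
  simp only [ContinuousLinearMap.flip_apply]
  exact (hu.contDiffAt.isSymmSndFDerivAt (by rw [minSmoothness_of_isRCLikeNormedField]; exact WithTop.coe_le_coe.mpr le_top)).eq w v

/-! ### rpow facts -/

lemma hasDerivAt_abs_rpow {q : ℝ} (hq : 2 ≤ q) (s : ℝ) :
    HasDerivAt (fun z : ℝ => |z| ^ q) (q * (|s| ^ (q - 2) * s)) s := by
  have habs : ∀ z : ℝ, (z ^ 2) ^ (q / 2) = |z| ^ q := by
    intro z
    rw [← sq_abs, ← Real.rpow_natCast |z| 2, ← Real.rpow_mul (abs_nonneg z)]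
    congr 1
    ring
  have h1 : HasDerivAt (fun z : ℝ => z ^ 2) (2 * s) s := by
    simpa using hasDerivAt_pow 2 s
  have h3 := h1.rpow_const (p := q / 2) (Or.inr (by linarith))
  have h4 : HasDerivAt (fun z : ℝ => |z| ^ q) (2 * s * (q / 2) * (s ^ 2) ^ (q / 2 - 1)) s := by
    simpa [habs] using h3
  convert h4 using 1
  have h5 : (s ^ 2 : ℝ) ^ (q / 2 - 1) = |s| ^ (q - 2) := by
    rw [← sq_abs, ← Real.rpow_natCast |s| 2, ← Real.rpow_mul (abs_nonneg s)]
    ring_nf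
  rw [h5]; ring

lemma cont_nl {q : ℝ} (hq : 0 ≤ q) : Continuous (fun s : ℝ => |s| ^ q * s) :=
  (continuous_abs.rpow_const (fun _ => Or.inr hq)).mul continuous_id

lemma abs_rpow_mul_self {q : ℝ} (hq : 2 ≤ q) (s : ℝ) :
    |s| ^ (q - 2) * s * s = |s| ^ q := by
  rcases eq_or_ne s 0 with rfl | hs
  · simp [Real.zero_rpow (by linarith : q ≠ 0)]
  · have h1 : s * s = |s| ^ (2 : ℝ) := by
      rw [show ((2:ℝ) = ((2:ℕ):ℝ)) by norm_num, Real.rpow_natCast, sq_abs]; ring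
    rw [mul_assoc, h1, ← Real.rpow_add (abs_pos.2 hs)]
    norm_num

/-! ### master integral lemma -/

lemma integral_pd_eq_zero {f : EuclideanSpace ℝ (Fin n) → ℝ} {R : ℝ} (hR : 0 < R)
    (v : EuclideanSpace ℝ (Fin n)) (hd : Differentiable ℝ f)
    (hc' : Continuous (fun x => fderiv ℝ f x v))
    (hs : ∀ x, R ≤ ‖x‖ → f x = 0) :
    ∫ x : EuclideanSpace ℝ (Fin n), fderiv ℝ f x v = 0 := by
  have hzero : ∀ x : EuclideanSpace ℝ (Fin n), R < ‖x‖ → fderiv ℝ f x = 0 := by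
    intro x hx
    have hev : f =ᶠ[𝓝 x] fun _ => (0 : ℝ) :=
      eventually_of_mem ((isOpen_lt continuous_const continuous_norm).mem_nhds hx)
        (fun y hy => hs y (le_of_lt hy))
    rw [hev.fderiv_eq]; simp
  set c : ContDiffBump (0 : EuclideanSpace ℝ (Fin n)) :=
    ⟨R + 1, R + 2, by linarith, by linarith⟩ with hc
  have hcIn : c.rIn = R + 1 := rfl
  have hcOut : c.rOut = R + 2 := rfl
  have hχ1 : ∀ x : EuclideanSpace ℝ (Fin n), ‖x‖ ≤ R + 1 → c x = 1 := by
    intro x hx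
    exact c.one_of_mem_closedBall (by simpa [hcIn] using mem_closedBall_zero_iff.2 hx)
  have hχ0 : ∀ x : EuclideanSpace ℝ (Fin n), R + 2 ≤ ‖x‖ → c x = 0 := by
    intro x hx
    rw [← Function.notMem_support, c.support_eq]
    simp only [mem_ball_zero_iff, hcOut, not_lt]
    exact hx
  have hχd0 : ∀ x : EuclideanSpace ℝ (Fin n), ‖x‖ < R + 1 → fderiv ℝ (c : _ → ℝ) x = 0 := by
    intro x hx
    have hev := c.eventuallyEq_one_of_mem_ball (x := x) (by simpa [hcIn] using mem_ball_zero_iff.2 hx)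
    rw [hev.fderiv_eq]
    exact fderiv_const_apply 1
  have hχcont : Continuous (c : EuclideanSpace ℝ (Fin n) → ℝ) := c.continuous
  have hχdcont : Continuous (fun x => fderiv ℝ (c : EuclideanSpace ℝ (Fin n) → ℝ) x v) :=
    (((c.contDiff (n := (⊤ : ℕ∞))).fderiv_right (m := 0) (by exact_mod_cast le_top)).continuous).clm_apply
      continuous_const
  have ig1 : Integrable (fun x => fderiv ℝ f x v * c x) := by
    apply (hc'.mul hχcont).integrable_of_hasCompactSupport
    apply HasCompactSupport.intro (isCompact_closedBall (0:EuclideanSpace ℝ (Fin n)) (R+2))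
    intro x hx
    have hxx : R + 2 < ‖x‖ := by simpa [mem_closedBall_zero_iff, not_le] using hx
    rw [Pi.mul_apply, hχ0 x hxx.le, mul_zero]
  have ig2 : Integrable (fun x => f x * fderiv ℝ (c : _ → ℝ) x v) := by
    apply (hd.continuous.mul hχdcont).integrable_of_hasCompactSupport
    apply HasCompactSupport.intro (isCompact_closedBall (0:EuclideanSpace ℝ (Fin n)) (R+2))
    intro x hx
    have hxx : R + 2 < ‖x‖ := by simpa [mem_closedBall_zero_iff, not_le] using hx
    rw [Pi.mul_apply, hs x (by linarith), zero_mul]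
  have ig3 : Integrable (fun x => f x * c x) := by
    apply (hd.continuous.mul hχcont).integrable_of_hasCompactSupport
    apply HasCompactSupport.intro (isCompact_closedBall (0:EuclideanSpace ℝ (Fin n)) (R+2))
    intro x hx
    have hxx : R + 2 < ‖x‖ := by simpa [mem_closedBall_zero_iff, not_le] using hx
    rw [Pi.mul_apply, hs x (by linarith), zero_mul]
  have key := integral_mul_fderiv_eq_neg_fderiv_mul_of_integrable ig1 ig2 ig3 (fun x _ => hd x)
    (fun x _ => (c.contDiff (n := (⊤ : ℕ∞))).differentiable (by simp) x) (v := v)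
  have e1 : (∫ x : EuclideanSpace ℝ (Fin n), fderiv ℝ f x v)
      = ∫ x, fderiv ℝ f x v * c x := by
    apply integral_congr_ae
    filter_upwards with x
    by_cases h : ‖x‖ ≤ R + 1
    · rw [hχ1 x h, mul_one]
    · rw [hzero x (by push_neg at h; linarith), ContinuousLinearMap.zero_apply, zero_mul]
  have e2 : (∫ x : EuclideanSpace ℝ (Fin n), f x * fderiv ℝ (c : _ → ℝ) x v) = 0 := by
    have : ∀ x : EuclideanSpace ℝ (Fin n), f x * fderiv ℝ (c : _ → ℝ) x v = 0 := by
      intro x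
      by_cases h : ‖x‖ < R + 1
      · rw [hχd0 x h, ContinuousLinearMap.zero_apply, mul_zero]
      · rw [hs x (by push_neg at h; linarith), zero_mul]
    simp only [this, integral_zero]
  rw [e1]
  rw [e2] at key
  linarith

def dψ (ψ : EuclideanSpace ℝ (Fin n) → ℝ) (i : Fin n) (x : EuclideanSpace ℝ (Fin n)) : ℝ :=
  fderiv ℝ ψ x (ee n i)
def ddψ (ψ : EuclideanSpace ℝ (Fin n) → ℝ) (i j : Fin n) (x : EuclideanSpace ℝ (Fin n)) : ℝ :=
  fderiv ℝ (dψ ψ j) x (ee n i)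
def dL (ψ : EuclideanSpace ℝ (Fin n) → ℝ) (i : Fin n) (x : EuclideanSpace ℝ (Fin n)) : ℝ :=
  fderiv ℝ (lapl ψ) x (ee n i)
def ddL (ψ : EuclideanSpace ℝ (Fin n) → ℝ) (i : Fin n) (x : EuclideanSpace ℝ (Fin n)) : ℝ :=
  fderiv ℝ (dL ψ i) x (ee n i)

lemma lapl_eq (ψ : EuclideanSpace ℝ (Fin n) → ℝ) (x : EuclideanSpace ℝ (Fin n)) :
    lapl ψ x = ∑ i, ddψ ψ i i x := rfl
lemma lapl_lapl_eq (ψ : EuclideanSpace ℝ (Fin n) → ℝ) (x : EuclideanSpace ℝ (Fin n)) :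
    lapl (lapl ψ) x = ∑ i, ddL ψ i x := rfl

section psi
variable {ψ : EuclideanSpace ℝ (Fin n) → ℝ} (hψ : ContDiff ℝ 4 ψ)
include hψ
lemma cd_dψ (i : Fin n) : ContDiff ℝ 3 (dψ ψ i) :=
  (hψ.fderiv_right (by norm_num)).clm_apply contDiff_const
lemma cd_ddψ (i j : Fin n) : ContDiff ℝ 2 (ddψ ψ i j) :=
  (((cd_dψ hψ j).fderiv_right (by norm_num)).clm_apply contDiff_const)
lemma cd_lapl : ContDiff ℝ 2 (lapl ψ) := by
  have : ContDiff ℝ 2 (fun x => ∑ i, ddψ ψ i i x) :=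
    ContDiff.sum fun i _ => cd_ddψ hψ i i
  exact this
lemma cd_dL (i : Fin n) : ContDiff ℝ 1 (dL ψ i) :=
  ((cd_lapl hψ).fderiv_right (m := 1) (by norm_num)).clm_apply contDiff_const
lemma cont_ddL (i : Fin n) : Continuous (ddL ψ i) :=
  (((cd_dL hψ i).fderiv_right (m := 0) (by norm_num)).clm_apply contDiff_const).continuous
end psi

variable (u : ℝ × EuclideanSpace ℝ (Fin n) → ℝ) (ψ : EuclideanSpace ℝ (Fin n) → ℝ) (lam pp : ℝ)

def mf (t : ℝ) (x : EuclideanSpace ℝ (Fin n)) : ℝ :=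
  Ut u (t, x) * ((∑ j, Ux u j (t, x) * dψ ψ j x) + 2⁻¹ * lapl ψ x * u (t, x))

def Dtm (q : ℝ × EuclideanSpace ℝ (Fin n)) : ℝ :=
  Utt u q * ((∑ j, Ux u j q * dψ ψ j q.2) + 2⁻¹ * lapl ψ q.2 * u q)
  + Ut u q * ((∑ j, Utx u j q * dψ ψ j q.2) + 2⁻¹ * lapl ψ q.2 * Ut u q)

def Wf (i : Fin n) (t : ℝ) (y : EuclideanSpace ℝ (Fin n)) : ℝ :=
  -(2⁻¹ * (Ut u (t, y) * Ut u (t, y) * dψ ψ i y))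
  - (∑ j, Ux u j (t, y) * dψ ψ j y) * Ux u i (t, y)
  + 2⁻¹ * ((∑ j, Ux u j (t, y) * Ux u j (t, y)) * dψ ψ i y)
  + (lam / pp) * (|u (t, y)| ^ pp * dψ ψ i y)
  - 2⁻¹ * (lapl ψ y * u (t, y) * Ux u i (t, y))
  + 4⁻¹ * (u (t, y) * u (t, y) * dL ψ i y)

def WDiv (i : Fin n) (q : ℝ × EuclideanSpace ℝ (Fin n)) : ℝ :=
  -(2⁻¹ * (Ut u q * Ut u q * ddψ ψ i i q.2
      + dψ ψ i q.2 * (Ut u q * Utx u i q + Ut u q * Utx u i q)))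
  - ((∑ j, Ux u j q * dψ ψ j q.2) * Uxx u i i q
      + Ux u i q * ∑ j, (Ux u j q * ddψ ψ i j q.2 + dψ ψ j q.2 * Uxx u i j q))
  + 2⁻¹ * ((∑ j, Ux u j q * Ux u j q) * ddψ ψ i i q.2
      + dψ ψ i q.2 * ∑ j, (Ux u j q * Uxx u i j q + Ux u j q * Uxx u i j q))
  + lam / pp * (|u q| ^ pp * ddψ ψ i i q.2
      + dψ ψ i q.2 * (pp * (|u q| ^ (pp - 2) * u q) * Ux u i q))
  - 2⁻¹ * (lapl ψ q.2 * u q * Uxx u i i q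
      + Ux u i q * (lapl ψ q.2 * Ux u i q + u q * dL ψ i q.2))
  + 4⁻¹ * (u q * u q * ddL ψ i q.2 + dL ψ i q.2 * (u q * Ux u i q + u q * Ux u i q))

def Gf (q : ℝ × EuclideanSpace ℝ (Fin n)) : ℝ :=
  (∑ i, Ux u i (q.1, q.2) * (∑ j, Ux u j (q.1, q.2) * ddψ ψ i j q.2))
  - 4⁻¹ * (u (q.1, q.2) * u (q.1, q.2)) * (∑ i, ddL ψ i q.2)
  + lam / n * |u (q.1, q.2)| ^ pp * (∑ i, ddψ ψ i i q.2)

lemma hasDerivAt_mf (hu : ContDiff ℝ (⊤ : ℕ∞) u) (t : ℝ) (x : EuclideanSpace ℝ (Fin n)) :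
    HasDerivAt (fun s => mf u ψ s x) (Dtm u ψ (t, x)) t := by
  have hA : HasDerivAt (fun s => u (s, x)) (Ut u (t, x)) t := hasDerivAt_curve hu t x
  have hAt : HasDerivAt (fun s => Ut u (s, x)) (Utt u (t, x)) t :=
    hasDerivAt_curve (smooth_Ut hu) t x
  have hAj : ∀ j : Fin n, HasDerivAt (fun s => Ux u j (s, x)) (Utx u j (t, x)) t := by
    intro j
    have h := hasDerivAt_curve (smooth_Ux hu j) t x
    have he : fderiv ℝ (Ux u j) (t, x) (1, 0) = Utx u j (t, x) := by
      simp only [Ux, Ut, Utx]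
      exact sym2 hu (t, x) (0, ee n j) (1, 0)
    rwa [he] at h
  have hsum : HasDerivAt (fun s => ∑ j, Ux u j (s, x) * dψ ψ j x)
      (∑ j, Utx u j (t, x) * dψ ψ j x) t :=
    HasDerivAt.fun_sum fun j _ => (hAj j).mul_const (dψ ψ j x)
  have hB : HasDerivAt (fun s => (∑ j, Ux u j (s, x) * dψ ψ j x) + 2⁻¹ * lapl ψ x * u (s, x))
      ((∑ j, Utx u j (t, x) * dψ ψ j x) + 2⁻¹ * lapl ψ x * Ut u (t, x)) t := by
    exact hsum.add (hA.const_mul (2⁻¹ * lapl ψ x))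
  exact hAt.mul hB

lemma wf_spatial (hu : ContDiff ℝ (⊤ : ℕ∞) u) (hψ : ContDiff ℝ 4 ψ) (hp : 2 ≤ pp)
    (i : Fin n) (t : ℝ) (x : EuclideanSpace ℝ (Fin n)) :
    DifferentiableAt ℝ (fun y => Wf u ψ lam pp i t y) x ∧
    fderiv ℝ (fun y => Wf u ψ lam pp i t y) x (ee n i) = WDiv u ψ lam pp i (t, x) := by
  have hu0 : HasFDerivAt (fun y => u (t, y)) ((fderiv ℝ u (t, x)).comp (inr ℝ ℝ _)) x :=
    hasFDerivAt_slice hu t x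
  have hux : ∀ j : Fin n, HasFDerivAt (fun y => Ux u j (t, y))
      ((fderiv ℝ (Ux u j) (t, x)).comp (inr ℝ ℝ _)) x :=
    fun j => hasFDerivAt_slice (smooth_Ux hu j) t x
  have hut : HasFDerivAt (fun y => Ut u (t, y))
      ((fderiv ℝ (Ut u) (t, x)).comp (inr ℝ ℝ _)) x := hasFDerivAt_slice (smooth_Ut hu) t x
  have hdψ : ∀ j : Fin n, HasFDerivAt (dψ ψ j) (fderiv ℝ (dψ ψ j) x) x := fun j =>
    ((cd_dψ hψ j).differentiable (by norm_num)).differentiableAt.hasFDerivAt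
  have hlapl : HasFDerivAt (lapl ψ) (fderiv ℝ (lapl ψ) x) x :=
    ((cd_lapl hψ).differentiable (by norm_num)).differentiableAt.hasFDerivAt
  have hdL : HasFDerivAt (dL ψ i) (fderiv ℝ (dL ψ i) x) x :=
    ((cd_dL hψ i).differentiable (by norm_num)).differentiableAt.hasFDerivAt
  have hN : HasFDerivAt (fun y => |u (t, y)| ^ pp)
      ((pp * (|u (t, x)| ^ (pp - 2) * u (t, x))) • ((fderiv ℝ u (t, x)).comp (inr ℝ ℝ _))) x :=
    HasDerivAt.comp_hasFDerivAt (h₂ := fun z : ℝ => |z| ^ pp) (f := fun y => u (t, y)) x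
      (hasDerivAt_abs_rpow hp (u (t, x))) hu0
  have H : HasFDerivAt (fun y => Wf u ψ lam pp i t y) _ x :=
    (((((((hut.mul hut).mul (hdψ i)).const_mul (2⁻¹ : ℝ)).neg).sub
      ((HasFDerivAt.fun_sum (fun j (_ : j ∈ Finset.univ) => (hux j).mul (hdψ j))).mul (hux i))).add
      (((HasFDerivAt.fun_sum (fun j (_ : j ∈ Finset.univ) => (hux j).mul (hux j))).mul
        (hdψ i)).const_mul (2⁻¹ : ℝ))).add
      ((hN.mul (hdψ i)).const_mul (lam / pp))).sub
      (((hlapl.mul hu0).mul (hux i)).const_mul (2⁻¹ : ℝ)) |>.add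
      (((hu0.mul hu0).mul hdL).const_mul (4⁻¹ : ℝ))
  refine ⟨H.differentiableAt, ?_⟩
  rw [H.fderiv]
  simp only [ContinuousLinearMap.add_apply, ContinuousLinearMap.sub_apply,
    ContinuousLinearMap.neg_apply, ContinuousLinearMap.smul_apply, smul_eq_mul,
    ContinuousLinearMap.coe_comp', Function.comp_apply, ContinuousLinearMap.inr_apply,
    ContinuousLinearMap.sum_apply]
  rfl

lemma divergence_identity (hu : ContDiff ℝ (⊤ : ℕ∞) u) (hp : 2 ≤ pp)
    (hco : lam / pp + lam / n - lam / 2 = 0)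
    (q : ℝ × EuclideanSpace ℝ (Fin n))
    (hpde : Utt u q = (∑ i, Uxx u i i q) - lam * (|u q| ^ (pp - 2) * u q)) :
    Dtm u ψ q + (∑ i, WDiv u ψ lam pp i q) + Gf u ψ lam pp q = 0 := by
  obtain ⟨t, x⟩ := q
  have hp0 : pp ≠ 0 := by norm_num at hp ⊢; linarith
  have hsym : ∀ i j : Fin n, Uxx u i j (t, x) = Uxx u j i (t, x) := by
    intro i j
    simp only [Uxx, Ux]
    exact sym2 hu (t, x) (0, ee n j) (0, ee n i)
  have hNA : |u (t, x)| ^ (pp - 2) * u (t, x) * u (t, x) = |u (t, x)| ^ pp :=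
    abs_rpow_mul_self hp _
  have hc2 : lam / pp * pp = lam := div_mul_cancel₀ lam hp0
  have e0 : ∀ i : Fin n, WDiv u ψ lam pp i (t, x) =
      -(2⁻¹ * (Ut u (t, x) * Ut u (t, x)) * ddψ ψ i i x)
      + -(Ut u (t, x) * (Utx u i (t, x) * dψ ψ i x))
      + -((∑ j, Ux u j (t, x) * dψ ψ j x) * Uxx u i i (t, x))
      + -(Ux u i (t, x) * (∑ j, Ux u j (t, x) * ddψ ψ i j x))
      + -(Ux u i (t, x) * (∑ j, dψ ψ j x * Uxx u i j (t, x)))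
      + 2⁻¹ * (∑ j, Ux u j (t, x) * Ux u j (t, x)) * ddψ ψ i i x
      + dψ ψ i x * (∑ j, Ux u j (t, x) * Uxx u i j (t, x))
      + lam / pp * |u (t, x)| ^ pp * ddψ ψ i i x
      + lam / pp * pp * ((|u (t, x)| ^ (pp - 2) * u (t, x)) * (Ux u i (t, x) * dψ ψ i x))
      + -(2⁻¹ * (lapl ψ x * u (t, x)) * Uxx u i i (t, x))
      + -(2⁻¹ * lapl ψ x * (Ux u i (t, x) * Ux u i (t, x)))
      + -(2⁻¹ * u (t, x) * (Ux u i (t, x) * dL ψ i x))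
      + 4⁻¹ * (u (t, x) * u (t, x)) * ddL ψ i x
      + 2⁻¹ * u (t, x) * (Ux u i (t, x) * dL ψ i x) := by
    intro i
    simp only [WDiv, Finset.sum_add_distrib]
    ring
  have hY : ∑ i, Ux u i (t, x) * (∑ j, dψ ψ j x * Uxx u i j (t, x))
      = ∑ i, dψ ψ i x * (∑ j, Ux u j (t, x) * Uxx u i j (t, x)) := by
    simp only [Finset.mul_sum]
    rw [Finset.sum_comm]
    exact Finset.sum_congr rfl fun i _ => Finset.sum_congr rfl fun j _ => by
      rw [hsym j i]; ring
  have hL : lapl ψ x = ∑ i, ddψ ψ i i x := lapl_eq ψ x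
  simp only [Dtm, Gf]
  rw [Finset.sum_congr rfl (fun i _ => e0 i)]
  simp only [Finset.sum_add_distrib, Finset.sum_neg_distrib, ← Finset.mul_sum]
  rw [hY, hpde, hc2, hL]
  linear_combination (-(2⁻¹ : ℝ) * lam * (∑ i, ddψ ψ i i x)) * hNA
    + (|u (t, x)| ^ pp * (∑ i, ddψ ψ i i x)) * hco

section cont
variable {u : ℝ × EuclideanSpace ℝ (Fin n) → ℝ} {ψ : EuclideanSpace ℝ (Fin n) → ℝ}
  (hu : ContDiff ℝ (⊤ : ℕ∞) u) (hψ : ContDiff ℝ 4 ψ)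
include hu hψ
set_option linter.unusedSectionVars false

lemma cont_u : Continuous u := hu.continuous
lemma cont_Ut : Continuous (Ut u) := (smooth_Ut hu).continuous
lemma cont_Ux (i : Fin n) : Continuous (Ux u i) := (smooth_Ux hu i).continuous
lemma cont_Utt : Continuous (Utt u) := (smooth_clm (smooth_Ut hu) _).continuous
lemma cont_Utx (i : Fin n) : Continuous (Utx u i) := (smooth_clm (smooth_Ut hu) _).continuous
lemma cont_Uxx (i j : Fin n) : Continuous (Uxx u i j) := (smooth_clm (smooth_Ux hu j) _).continuous
lemma cont_dψ2 (i : Fin n) : Continuous fun q : ℝ × EuclideanSpace ℝ (Fin n) => dψ ψ i q.2 :=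
  (cd_dψ hψ i).continuous.comp continuous_snd
lemma cont_ddψ2 (i j : Fin n) : Continuous fun q : ℝ × EuclideanSpace ℝ (Fin n) => ddψ ψ i j q.2 :=
  (cd_ddψ hψ i j).continuous.comp continuous_snd
lemma cont_lapl2 : Continuous fun q : ℝ × EuclideanSpace ℝ (Fin n) => lapl ψ q.2 :=
  (cd_lapl hψ).continuous.comp continuous_snd
lemma cont_dL2 (i : Fin n) : Continuous fun q : ℝ × EuclideanSpace ℝ (Fin n) => dL ψ i q.2 :=
  (cd_dL hψ i).continuous.comp continuous_snd
lemma cont_ddL2 (i : Fin n) : Continuous fun q : ℝ × EuclideanSpace ℝ (Fin n) => ddL ψ i q.2 :=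
  (cont_ddL hψ i).comp continuous_snd

lemma cont_Dtm : Continuous (Dtm u ψ) := by
  unfold Dtm
  exact ((cont_Utt hu hψ).mul (((continuous_finset_sum _ fun j _ => (cont_Ux hu hψ j).mul
      (cont_dψ2 hu hψ j))).add (((continuous_const.mul (cont_lapl2 hu hψ)).mul (cont_u hu hψ))))).add
    ((cont_Ut hu hψ).mul (((continuous_finset_sum _ fun j _ => (cont_Utx hu hψ j).mul
      (cont_dψ2 hu hψ j))).add ((continuous_const.mul (cont_lapl2 hu hψ)).mul (cont_Ut hu hψ))))

lemma cont_N {pp : ℝ} (hp : 2 ≤ pp) :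
    Continuous fun q : ℝ × EuclideanSpace ℝ (Fin n) => |u q| ^ pp :=
  (cont_u hu hψ).abs.rpow_const fun _ => Or.inr (by linarith)

lemma cont_nl' {pp : ℝ} (hp : 2 ≤ pp) :
    Continuous fun q : ℝ × EuclideanSpace ℝ (Fin n) => |u q| ^ (pp - 2) * u q :=
  (cont_nl (by linarith : (0:ℝ) ≤ pp - 2)).comp (cont_u hu hψ)

lemma cont_WDiv {lam pp : ℝ} (hp : 2 ≤ pp) (i : Fin n) : Continuous (WDiv u ψ lam pp i) := by
  unfold WDiv
  refine ((((((continuous_const.mul ((((cont_Ut hu hψ).mul (cont_Ut hu hψ)).mul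
      (cont_ddψ2 hu hψ i i)).add ((cont_dψ2 hu hψ i).mul (((cont_Ut hu hψ).mul (cont_Utx hu hψ i)).add
      ((cont_Ut hu hψ).mul (cont_Utx hu hψ i)))))).neg).sub
    (((continuous_finset_sum _ fun j _ => (cont_Ux hu hψ j).mul (cont_dψ2 hu hψ j)).mul
        (cont_Uxx hu hψ i i)).add ((cont_Ux hu hψ i).mul (continuous_finset_sum _ fun j _ =>
        ((cont_Ux hu hψ j).mul (cont_ddψ2 hu hψ i j)).add ((cont_dψ2 hu hψ j).mul
        (cont_Uxx hu hψ i j)))))).add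
    (continuous_const.mul (((continuous_finset_sum _ fun j _ => (cont_Ux hu hψ j).mul
        (cont_Ux hu hψ j)).mul (cont_ddψ2 hu hψ i i)).add ((cont_dψ2 hu hψ i).mul
        (continuous_finset_sum _ fun j _ => ((cont_Ux hu hψ j).mul (cont_Uxx hu hψ i j)).add
        ((cont_Ux hu hψ j).mul (cont_Uxx hu hψ i j))))))).add
    (continuous_const.mul (((cont_N hu hψ hp).mul (cont_ddψ2 hu hψ i i)).add ((cont_dψ2 hu hψ i).mul
      ((continuous_const.mul (cont_nl' hu hψ hp)).mul (cont_Ux hu hψ i)))))).sub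
    (continuous_const.mul ((((cont_lapl2 hu hψ).mul (cont_u hu hψ)).mul (cont_Uxx hu hψ i i)).add
      ((cont_Ux hu hψ i).mul (((cont_lapl2 hu hψ).mul (cont_Ux hu hψ i)).add ((cont_u hu hψ).mul
      (cont_dL2 hu hψ i))))))).add
    (continuous_const.mul ((((cont_u hu hψ).mul (cont_u hu hψ)).mul (cont_ddL2 hu hψ i)).add
      ((cont_dL2 hu hψ i).mul (((cont_u hu hψ).mul (cont_Ux hu hψ i)).add ((cont_u hu hψ).mul
      (cont_Ux hu hψ i))))))

lemma cont_mf (t : ℝ) : Continuous fun x => mf u ψ t x := by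
  unfold mf
  have hc : Continuous fun x : EuclideanSpace ℝ (Fin n) => ((t, x) : ℝ × EuclideanSpace ℝ (Fin n)) :=
    continuous_const.prodMk continuous_id
  exact ((cont_Ut hu hψ).comp hc).mul ((continuous_finset_sum _ fun j _ =>
    ((cont_Ux hu hψ j).comp hc).mul (cd_dψ hψ j).continuous).add
    ((continuous_const.mul (cd_lapl hψ).continuous).mul ((cont_u hu hψ).comp hc)))

end cont

section bridge
variable {u : ℝ × EuclideanSpace ℝ (Fin n) → ℝ} {ψ : EuclideanSpace ℝ (Fin n) → ℝ}

lemma grad_inner (f : EuclideanSpace ℝ (Fin n) → ℝ) (x v : EuclideanSpace ℝ (Fin n)) :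
    ⟪gradient f x, v⟫ = fderiv ℝ f x v := by
  unfold gradient
  exact InnerProductSpace.toDual_symm_apply

lemma coord_inner (v : EuclideanSpace ℝ (Fin n)) (i : Fin n) : ⟪v, ee n i⟫ = v i := by
  unfold ee
  rw [EuclideanSpace.inner_single_right]
  simp

lemma grad_coord (f : EuclideanSpace ℝ (Fin n) → ℝ) (x : EuclideanSpace ℝ (Fin n)) (i : Fin n) :
    gradient f x i = fderiv ℝ f x (ee n i) := by
  rw [← coord_inner (gradient f x) i, grad_inner]

lemma euclid_decomp (v : EuclideanSpace ℝ (Fin n)) : v = ∑ i, v i • ee n i := by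
  have h := (EuclideanSpace.basisFun (Fin n) ℝ).sum_repr v
  simp only [EuclideanSpace.basisFun_apply, EuclideanSpace.basisFun_repr] at h
  exact h.symm

lemma dtu_eq (hu : ContDiff ℝ (⊤ : ℕ∞) u) (t : ℝ) (x : EuclideanSpace ℝ (Fin n)) :
    dtu u t x = Ut u (t, x) := (hasDerivAt_curve hu t x).deriv

lemma dttu_eq (hu : ContDiff ℝ (⊤ : ℕ∞) u) (t : ℝ) (x : EuclideanSpace ℝ (Fin n)) :
    dttu u t x = Utt u (t, x) := by
  unfold dttu
  have h : (fun s => dtu u s x) = fun s => Ut u (s, x) := funext fun s => dtu_eq hu s x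
  rw [h]
  exact (hasDerivAt_curve (smooth_Ut hu) t x).deriv

lemma Ux_slice (hu : ContDiff ℝ (⊤ : ℕ∞) u) (t : ℝ) (x : EuclideanSpace ℝ (Fin n)) (i : Fin n) :
    fderiv ℝ (fun y => u (t, y)) x (ee n i) = Ux u i (t, x) := by
  rw [(hasFDerivAt_slice hu t x).fderiv]
  rfl

lemma gradx_coord (hu : ContDiff ℝ (⊤ : ℕ∞) u) (t : ℝ) (x : EuclideanSpace ℝ (Fin n)) (i : Fin n) :
    gradx u t x i = Ux u i (t, x) := by
  unfold gradx
  rw [grad_coord, Ux_slice hu]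

lemma inner_gradx_gradψ (hu : ContDiff ℝ (⊤ : ℕ∞) u) (t : ℝ) (x : EuclideanSpace ℝ (Fin n)) :
    ⟪gradx u t x, gradient ψ x⟫ = ∑ j, Ux u j (t, x) * dψ ψ j x := by
  rw [real_inner_comm, grad_inner]
  conv_lhs => rw [euclid_decomp (gradx u t x), _root_.map_sum]
  refine Finset.sum_congr rfl fun j _ => ?_
  rw [_root_.map_smul, smul_eq_mul, gradx_coord hu]
  rfl

lemma mf_eq (hu : ContDiff ℝ (⊤ : ℕ∞) u) (t : ℝ) (x : EuclideanSpace ℝ (Fin n)) :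
    dtu u t x * ⟪gradx u t x, gradient ψ x⟫ + (1/2 : ℝ) * lapl ψ x * dtu u t x * u (t, x)
      = mf u ψ t x := by
  rw [dtu_eq hu, inner_gradx_gradψ hu]
  unfold mf
  ring

lemma lapl_slice (hu : ContDiff ℝ (⊤ : ℕ∞) u) (t : ℝ) (x : EuclideanSpace ℝ (Fin n)) :
    lapl (fun y => u (t, y)) x = ∑ i, Uxx u i i (t, x) := by
  unfold lapl
  refine Finset.sum_congr rfl fun i _ => ?_
  have h1 : (fun y => fderiv ℝ (fun z => u (t, z)) y (EuclideanSpace.single i 1))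
      = fun y => Ux u i (t, y) := funext fun y => Ux_slice hu t y i
  rw [h1, (hasFDerivAt_slice (smooth_Ux hu i) t x).fderiv]
  rfl

lemma hess_apply (hψ : ContDiff ℝ 4 ψ) (x : EuclideanSpace ℝ (Fin n)) (i j : Fin n) :
    fderiv ℝ (fderiv ℝ ψ) x (ee n i) (ee n j) = ddψ ψ i j x := by
  have hd : DifferentiableAt ℝ (fderiv ℝ ψ) x :=
    ((hψ.fderiv_right (m := 3) (by norm_num)).differentiable (by norm_num)).differentiableAt
  have h := fderiv_clm_apply hd (differentiableAt_const (ee n j))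
  unfold ddψ dψ
  rw [h]
  simp

lemma iterated_two (hψ : ContDiff ℝ 4 ψ) (x : EuclideanSpace ℝ (Fin n))
    (v w : EuclideanSpace ℝ (Fin n)) :
    (iteratedFDeriv ℝ 2 ψ x) ![v, w] = ∑ i, v i * ∑ j, w j * ddψ ψ i j x := by
  rw [iteratedFDeriv_two_apply]
  show fderiv ℝ (fderiv ℝ ψ) x v w = _
  conv_lhs => rw [euclid_decomp v, _root_.map_sum]
  rw [ContinuousLinearMap.sum_apply]
  refine Finset.sum_congr rfl fun i _ => ?_
  rw [_root_.map_smul, ContinuousLinearMap.smul_apply, smul_eq_mul]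
  congr 1
  conv_lhs => rw [euclid_decomp w, _root_.map_sum]
  refine Finset.sum_congr rfl fun j _ => ?_
  rw [_root_.map_smul, smul_eq_mul, hess_apply hψ]

lemma Gf_eq (hu : ContDiff ℝ (⊤ : ℕ∞) u) (hψ : ContDiff ℝ 4 ψ) (lam pp : ℝ) (t : ℝ)
    (x : EuclideanSpace ℝ (Fin n)) :
    (iteratedFDeriv ℝ 2 ψ x) ![gradx u t x, gradx u t x]
      - (1/4 : ℝ) * (u (t, x))^2 * lapl (lapl ψ) x
      + (lam / n) * |u (t, x)| ^ pp * lapl ψ x = Gf u ψ lam pp (t, x) := by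
  rw [iterated_two hψ]
  unfold Gf
  rw [lapl_lapl_eq, lapl_eq]
  have h : ∀ i, gradx u t x i = Ux u i (t, x) := gradx_coord hu t x
  simp only [h]
  ring

end bridge

section support
variable {u : ℝ × EuclideanSpace ℝ (Fin n) → ℝ}

lemma vanish_fderiv_open {X : Type*} [NormedAddCommGroup X] [NormedSpace ℝ X]
    {F : X → ℝ} {O : Set X} (hO : IsOpen O) (hF : ∀ p ∈ O, F p = 0) {p : X} (hp : p ∈ O) :
    fderiv ℝ F p = 0 := by
  have hev : F =ᶠ[𝓝 p] fun _ => 0 := eventually_of_mem (hO.mem_nhds hp) hF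
  rw [hev.fderiv_eq]
  exact fderiv_const_apply 0

lemma vanish_interior {T R : ℝ}
    (hs : ∀ t ∈ Set.Icc (-T) T, ∀ x : EuclideanSpace ℝ (Fin n), R ≤ ‖x‖ → u (t, x) = 0)
    {t : ℝ} (ht : t ∈ Set.Ioo (-T) T) {x : EuclideanSpace ℝ (Fin n)} (hx : R < ‖x‖) :
    u (t, x) = 0 ∧ Ut u (t, x) = 0 ∧ (∀ i, Ux u i (t, x) = 0) ∧ Utt u (t, x) = 0 ∧
    (∀ i, Utx u i (t, x) = 0) ∧ (∀ i j, Uxx u i j (t, x) = 0) := by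
  set O : Set (ℝ × EuclideanSpace ℝ (Fin n)) :=
    (Set.Ioo (-T) T) ×ˢ {y : EuclideanSpace ℝ (Fin n) | R < ‖y‖} with hO
  have hOopen : IsOpen O := isOpen_Ioo.prod (isOpen_lt continuous_const continuous_norm)
  have hmem : (t, x) ∈ O := ⟨ht, hx⟩
  have hu0 : ∀ p ∈ O, u p = 0 := fun p hp =>
    hs p.1 (Set.Ioo_subset_Icc_self hp.1) p.2 (le_of_lt hp.2)
  have hUt0 : ∀ p ∈ O, Ut u p = 0 := fun p hp => by
    unfold Ut; rw [vanish_fderiv_open hOopen hu0 hp]; rfl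
  have hUx0 : ∀ i, ∀ p ∈ O, Ux u i p = 0 := fun i p hp => by
    unfold Ux; rw [vanish_fderiv_open hOopen hu0 hp]; rfl
  refine ⟨hu0 _ hmem, hUt0 _ hmem, fun i => hUx0 i _ hmem, ?_, fun i => ?_, fun i j => ?_⟩
  · unfold Utt; rw [vanish_fderiv_open hOopen hUt0 hmem]; rfl
  · unfold Utx; rw [vanish_fderiv_open hOopen hUt0 hmem]; rfl
  · unfold Uxx; rw [vanish_fderiv_open hOopen (hUx0 j) hmem]; rfl

lemma vanish_slice (hu : ContDiff ℝ (⊤ : ℕ∞) u) {T R : ℝ}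
    (hs : ∀ t ∈ Set.Icc (-T) T, ∀ x : EuclideanSpace ℝ (Fin n), R ≤ ‖x‖ → u (t, x) = 0)
    {t : ℝ} (ht : t ∈ Set.Icc (-T) T) {x : EuclideanSpace ℝ (Fin n)} (hx : R < ‖x‖) :
    u (t, x) = 0 ∧ (∀ i, Ux u i (t, x) = 0) := by
  have hOopen : IsOpen {y : EuclideanSpace ℝ (Fin n) | R < ‖y‖} :=
    isOpen_lt continuous_const continuous_norm
  have hsl : ∀ y ∈ {y : EuclideanSpace ℝ (Fin n) | R < ‖y‖}, u (t, y) = 0 :=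
    fun y hy => hs t ht y (le_of_lt hy)
  refine ⟨hs t ht x (le_of_lt hx), fun i => ?_⟩
  rw [← Ux_slice hu, vanish_fderiv_open hOopen hsl hx]
  rfl

end support

end MorawetzAux

/-- Morawetz multiplier identity for compactly supported classical solutions of the
critical nonlinear wave equation. -/
theorem morawetz_multiplier_identity {n : ℕ} (hn : 3 ≤ n) (T : ℝ) (hT : 0 < T) (lam : ℝ)
    (u : ℝ × EuclideanSpace ℝ (Fin n) → ℝ)
    (hu : IsCriticalNLW lam u)
    (hsupp : SpatiallyCompactOn u (Set.Icc (-T) T))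
    (ψ : EuclideanSpace ℝ (Fin n) → ℝ) (hψ : ContDiff ℝ 4 ψ) :
    (∫ t in (-T)..T, ∫ x : EuclideanSpace ℝ (Fin n),
        ((iteratedFDeriv ℝ 2 ψ x) ![gradx u t x, gradx u t x]
          - (1/4) * (u (t, x))^2 * lapl (lapl ψ) x
          + (lam / n) * |u (t, x)| ^ twoStar n * lapl ψ x))
      = - (∫ x : EuclideanSpace ℝ (Fin n),
            (dtu u T x * ⟪gradx u T x, gradient ψ x⟫
              + (1/2) * lapl ψ x * dtu u T x * u (T, x)))
        + ∫ x : EuclideanSpace ℝ (Fin n),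
            (dtu u (-T) x * ⟪gradx u (-T) x, gradient ψ x⟫
              + (1/2) * lapl ψ x * dtu u (-T) x * u (-T, x)) := by
  classical
  obtain ⟨husm, hpde0⟩ := hu
  obtain ⟨R, hR, hs⟩ := hsupp
  set p : ℝ := twoStar n with hpdef
  have hn3 : (3:ℝ) ≤ (n:ℝ) := by exact_mod_cast hn
  have hn2 : (0:ℝ) < (n:ℝ) - 2 := by linarith
  have hn0 : (0:ℝ) < (n:ℝ) := by linarith
  have hp : 2 ≤ p := by
    rw [hpdef, twoStar, le_div_iff₀ hn2]; linarith
  have hppos : (0:ℝ) < p := lt_of_lt_of_le two_pos hp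
  have hp0 : p ≠ 0 := ne_of_gt hppos
  have hco : lam / p + lam / (n:ℝ) - lam / 2 = 0 := by
    rw [hpdef, twoStar]
    field_simp
    ring
  have hpde : ∀ q : ℝ × EuclideanSpace ℝ (Fin n),
      MorawetzAux.Utt u q = (∑ i, MorawetzAux.Uxx u i i q)
        - lam * (|u q| ^ (p - 2) * u q) := by
    rintro ⟨t, x⟩
    have h := hpde0 t x
    rw [MorawetzAux.dttu_eq husm, MorawetzAux.lapl_slice husm] at h
    ring_nf at h ⊢
    linarith
  have key_int : ∀ g : EuclideanSpace ℝ (Fin n) → ℝ, Continuous g →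
      (∀ x : EuclideanSpace ℝ (Fin n), R + 1 ≤ ‖x‖ → g x = 0) → Integrable g := by
    intro g hg h0
    apply hg.integrable_of_hasCompactSupport
    apply HasCompactSupport.intro (isCompact_closedBall (0 : EuclideanSpace ℝ (Fin n)) (R + 1))
    intro x hx
    exact h0 x (le_of_lt (by simpa [mem_closedBall_zero_iff, not_le] using hx))
  have hvan : ∀ t ∈ Set.Ioo (-T) T, ∀ x : EuclideanSpace ℝ (Fin n), R < ‖x‖ →
      MorawetzAux.Gf u ψ lam p (t, x) = 0 ∧ MorawetzAux.Dtm u ψ (t, x) = 0 ∧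
      ∀ i, MorawetzAux.WDiv u ψ lam p i (t, x) = 0 ∧ MorawetzAux.Wf u ψ lam p i t x = 0 := by
    intro t ht x hx
    obtain ⟨h0, h1, h2, h3, h4, h5⟩ := MorawetzAux.vanish_interior hs ht hx
    refine ⟨?_, ?_, fun i => ⟨?_, ?_⟩⟩ <;>
      simp [MorawetzAux.Gf, MorawetzAux.Dtm, MorawetzAux.WDiv, MorawetzAux.Wf,
        h0, h1, h2, h3, h4, h5, Real.zero_rpow hp0]
  have step1 : ∀ t ∈ Set.Ioo (-T) T,
      (∫ x : EuclideanSpace ℝ (Fin n), MorawetzAux.Gf u ψ lam p (t, x))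
        = - ∫ x : EuclideanSpace ℝ (Fin n), MorawetzAux.Dtm u ψ (t, x) := by
    intro t ht
    have hconst : Continuous fun x : EuclideanSpace ℝ (Fin n) => ((t, x) : ℝ × EuclideanSpace ℝ (Fin n)) :=
      continuous_const.prodMk continuous_id
    have intD : Integrable (fun x : EuclideanSpace ℝ (Fin n) => MorawetzAux.Dtm u ψ (t, x)) :=
      key_int _ ((MorawetzAux.cont_Dtm husm hψ).comp hconst)
        (fun x hx => (hvan t ht x (by linarith)).2.1)
    have intW : ∀ i, Integrable (fun x : EuclideanSpace ℝ (Fin n) => MorawetzAux.WDiv u ψ lam p i (t, x)) :=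
      fun i => key_int _ ((MorawetzAux.cont_WDiv husm hψ hp i).comp hconst)
        (fun x hx => ((hvan t ht x (by linarith)).2.2 i).1)
    have hWint : ∀ i, (∫ x : EuclideanSpace ℝ (Fin n), MorawetzAux.WDiv u ψ lam p i (t, x)) = 0 := by
      intro i
      have hdiff : Differentiable ℝ (fun y => MorawetzAux.Wf u ψ lam p i t y) :=
        fun x => (MorawetzAux.wf_spatial u ψ lam p husm hψ hp i t x).1
      have heq : (fun x => fderiv ℝ (fun y => MorawetzAux.Wf u ψ lam p i t y) x (MorawetzAux.ee n i))
          = fun x => MorawetzAux.WDiv u ψ lam p i (t, x) :=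
        funext fun x => (MorawetzAux.wf_spatial u ψ lam p husm hψ hp i t x).2
      have hz := MorawetzAux.integral_pd_eq_zero (f := fun y => MorawetzAux.Wf u ψ lam p i t y)
        (R := R + 1) (by linarith) (MorawetzAux.ee n i) hdiff
        (by rw [heq]; exact (MorawetzAux.cont_WDiv husm hψ hp i).comp hconst)
        (fun x hx => ((hvan t ht x (by linarith)).2.2 i).2)
      rw [heq] at hz
      exact hz
    have hGD : ∀ x : EuclideanSpace ℝ (Fin n), MorawetzAux.Gf u ψ lam p (t, x)
        = - MorawetzAux.Dtm u ψ (t, x) - ∑ i, MorawetzAux.WDiv u ψ lam p i (t, x) := by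
      intro x
      have h := MorawetzAux.divergence_identity u ψ lam p husm hp hco (t, x) (hpde (t, x))
      linarith
    calc (∫ x : EuclideanSpace ℝ (Fin n), MorawetzAux.Gf u ψ lam p (t, x))
        = ∫ x : EuclideanSpace ℝ (Fin n),
            (- MorawetzAux.Dtm u ψ (t, x) - ∑ i, MorawetzAux.WDiv u ψ lam p i (t, x)) := by
          simp only [hGD]
      _ = (∫ x : EuclideanSpace ℝ (Fin n), - MorawetzAux.Dtm u ψ (t, x))
            - ∫ x : EuclideanSpace ℝ (Fin n), ∑ i, MorawetzAux.WDiv u ψ lam p i (t, x) :=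
          integral_sub intD.neg (integrable_finset_sum _ fun i _ => intW i)
      _ = - ∫ x : EuclideanSpace ℝ (Fin n), MorawetzAux.Dtm u ψ (t, x) := by
          rw [integral_neg, integral_finset_sum _ fun i _ => intW i]
          simp [hWint]
  have ftc : ∀ x : EuclideanSpace ℝ (Fin n),
      (∫ s in Set.Ioo (-T) T, MorawetzAux.Dtm u ψ (s, x))
        = MorawetzAux.mf u ψ T x - MorawetzAux.mf u ψ (-T) x := by
    intro x
    rw [← integral_Ioc_eq_integral_Ioo,
      ← intervalIntegral.integral_of_le (by linarith : -T ≤ T)]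
    exact intervalIntegral.integral_eq_sub_of_hasDerivAt
      (fun s _ => MorawetzAux.hasDerivAt_mf u ψ husm s x)
      (((MorawetzAux.cont_Dtm husm hψ).comp
        (continuous_id.prodMk continuous_const)).intervalIntegrable _ _)
  have hprod : Integrable (fun q : ℝ × EuclideanSpace ℝ (Fin n) => MorawetzAux.Dtm u ψ q)
      ((volume.restrict (Set.Ioo (-T) T)).prod volume) := by
    have hmeas : (volume.restrict (Set.Ioo (-T) T)).prod (volume : Measure (EuclideanSpace ℝ (Fin n)))
        = (volume : Measure (ℝ × EuclideanSpace ℝ (Fin n))).restrict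
            ((Set.Ioo (-T) T) ×ˢ (Set.univ : Set (EuclideanSpace ℝ (Fin n)))) := by
      conv_lhs => rw [show (volume : Measure (EuclideanSpace ℝ (Fin n)))
        = volume.restrict Set.univ from (Measure.restrict_univ).symm]
      rw [Measure.prod_restrict, ← Measure.volume_eq_prod]
    rw [hmeas]
    have h1 : IntegrableOn (MorawetzAux.Dtm u ψ)
        ((Set.Icc (-T) T) ×ˢ closedBall (0 : EuclideanSpace ℝ (Fin n)) (R + 1)) volume :=
      (MorawetzAux.cont_Dtm husm hψ).continuousOn.integrableOn_compact
        (isCompact_Icc.prod (isCompact_closedBall _ _))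
    have h2 : IntegrableOn (MorawetzAux.Dtm u ψ)
        ((Set.Ioo (-T) T) ×ˢ closedBall (0 : EuclideanSpace ℝ (Fin n)) (R + 1)) volume :=
      h1.mono_set (Set.prod_mono Set.Ioo_subset_Icc_self subset_rfl)
    have hmeas2 : MeasurableSet
        ((Set.Ioo (-T) T) ×ˢ (Set.univ : Set (EuclideanSpace ℝ (Fin n)))) :=
      measurableSet_Ioo.prod MeasurableSet.univ
    show IntegrableOn (MorawetzAux.Dtm u ψ)
      ((Set.Ioo (-T) T) ×ˢ (Set.univ : Set (EuclideanSpace ℝ (Fin n)))) volume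
    rw [← integrable_indicator_iff hmeas2]
    have hind : ((Set.Ioo (-T) T) ×ˢ (Set.univ : Set (EuclideanSpace ℝ (Fin n)))).indicator
          (MorawetzAux.Dtm u ψ)
        = ((Set.Ioo (-T) T) ×ˢ closedBall (0 : EuclideanSpace ℝ (Fin n)) (R + 1)).indicator
          (MorawetzAux.Dtm u ψ) := by
      funext q
      by_cases hq1 : q ∈ (Set.Ioo (-T) T) ×ˢ closedBall (0 : EuclideanSpace ℝ (Fin n)) (R + 1)
      · rw [Set.indicator_of_mem hq1, Set.indicator_of_mem (Set.mem_prod.mpr ⟨(Set.mem_prod.mp hq1).1, Set.mem_univ _⟩)]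
      · rw [Set.indicator_of_notMem hq1]
        by_cases hq2 : q ∈ (Set.Ioo (-T) T) ×ˢ (Set.univ : Set (EuclideanSpace ℝ (Fin n)))
        · rw [Set.indicator_of_mem hq2]
          have hq2' : q.2 ∉ closedBall (0 : EuclideanSpace ℝ (Fin n)) (R + 1) :=
            fun hc => hq1 (Set.mem_prod.mpr ⟨(Set.mem_prod.mp hq2).1, hc⟩)
          have h' : R + 1 < ‖q.2‖ := by
            simpa [mem_closedBall_zero_iff, not_le] using hq2'
          have hxnorm : R < ‖q.2‖ := by linarith
          have hv := (hvan q.1 (Set.mem_prod.mp hq2).1 q.2 hxnorm).2.1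
          simpa using hv
        · rw [Set.indicator_of_notMem hq2]
    rw [hind, integrable_indicator_iff (measurableSet_Ioo.prod measurableSet_closedBall)]
    exact h2
  have swap : (∫ t in Set.Ioo (-T) T, ∫ x : EuclideanSpace ℝ (Fin n), MorawetzAux.Dtm u ψ (t, x))
      = ∫ x : EuclideanSpace ℝ (Fin n), ∫ t in Set.Ioo (-T) T, MorawetzAux.Dtm u ψ (t, x) :=
    MeasureTheory.integral_integral_swap hprod
  have hmfInt : ∀ t₀ ∈ Set.Icc (-T) T,
      Integrable (fun x : EuclideanSpace ℝ (Fin n) => MorawetzAux.mf u ψ t₀ x) := by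
    intro t₀ ht₀
    refine key_int _ (MorawetzAux.cont_mf husm hψ t₀) (fun x hx => ?_)
    obtain ⟨h0, h1⟩ := MorawetzAux.vanish_slice husm hs ht₀
      (lt_of_lt_of_le (by linarith : R < R + 1) hx)
    simp [MorawetzAux.mf, h0, h1]
  have hae : ∀ᵐ (t : ℝ), t ∈ Set.uIoc (-T) T →
      (∫ x : EuclideanSpace ℝ (Fin n), MorawetzAux.Gf u ψ lam p (t, x))
        = - ∫ x : EuclideanSpace ℝ (Fin n), MorawetzAux.Dtm u ψ (t, x) := by
    filter_upwards [compl_mem_ae_iff.mpr (measure_singleton T)] with t hT' hmem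
    have htne : t ≠ T := by simpa using hT'
    rw [Set.uIoc_of_le (by linarith : -T ≤ T)] at hmem
    exact step1 t ⟨hmem.1, lt_of_le_of_ne hmem.2 htne⟩
  calc (∫ t in (-T)..T, ∫ x : EuclideanSpace ℝ (Fin n),
        ((iteratedFDeriv ℝ 2 ψ x) ![gradx u t x, gradx u t x]
          - (1/4) * (u (t, x))^2 * lapl (lapl ψ) x
          + (lam / n) * |u (t, x)| ^ twoStar n * lapl ψ x))
      = ∫ t in (-T)..T, ∫ x : EuclideanSpace ℝ (Fin n), MorawetzAux.Gf u ψ lam p (t, x) := by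
        apply intervalIntegral.integral_congr
        intro t _
        exact integral_congr_ae (Filter.Eventually.of_forall fun x =>
          MorawetzAux.Gf_eq husm hψ lam p t x)
    _ = ∫ t in (-T)..T, (- ∫ x : EuclideanSpace ℝ (Fin n), MorawetzAux.Dtm u ψ (t, x)) :=
        intervalIntegral.integral_congr_ae hae
    _ = - ∫ t in (-T)..T, ∫ x : EuclideanSpace ℝ (Fin n), MorawetzAux.Dtm u ψ (t, x) :=
        intervalIntegral.integral_neg
    _ = - ∫ t in Set.Ioo (-T) T, ∫ x : EuclideanSpace ℝ (Fin n), MorawetzAux.Dtm u ψ (t, x) := by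
        rw [intervalIntegral.integral_of_le (by linarith : -T ≤ T), integral_Ioc_eq_integral_Ioo]
    _ = - ∫ x : EuclideanSpace ℝ (Fin n), ∫ t in Set.Ioo (-T) T, MorawetzAux.Dtm u ψ (t, x) := by
        rw [swap]
    _ = - ∫ x : EuclideanSpace ℝ (Fin n), (MorawetzAux.mf u ψ T x - MorawetzAux.mf u ψ (-T) x) := by
        congr 1
        exact integral_congr_ae (Filter.Eventually.of_forall ftc)
    _ = - ((∫ x : EuclideanSpace ℝ (Fin n), MorawetzAux.mf u ψ T x)
          - ∫ x : EuclideanSpace ℝ (Fin n), MorawetzAux.mf u ψ (-T) x) := by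
        rw [integral_sub (hmfInt T ⟨by linarith, le_refl T⟩)
          (hmfInt (-T) ⟨le_refl (-T), by linarith⟩)]
    _ = - (∫ x : EuclideanSpace ℝ (Fin n),
            (dtu u T x * ⟪gradx u T x, gradient ψ x⟫
              + (1/2) * lapl ψ x * dtu u T x * u (T, x)))
        + ∫ x : EuclideanSpace ℝ (Fin n),
            (dtu u (-T) x * ⟪gradx u (-T) x, gradient ψ x⟫
              + (1/2) * lapl ψ x * dtu u (-T) x * u (-T, x)) := by
        rw [show (fun x : EuclideanSpace ℝ (Fin n) =>
            dtu u T x * ⟪gradx u T x, gradient ψ x⟫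
              + (1/2) * lapl ψ x * dtu u T x * u (T, x))
            = fun x => MorawetzAux.mf u ψ T x from funext fun x => MorawetzAux.mf_eq husm T x]
        rw [show (fun x : EuclideanSpace ℝ (Fin n) =>
            dtu u (-T) x * ⟪gradx u (-T) x, gradient ψ x⟫
              + (1/2) * lapl ψ x * dtu u (-T) x * u (-T, x))
            = fun x => MorawetzAux.mf u ψ (-T) x from funext fun x => MorawetzAux.mf_eq husm (-T) x]
        ring
end
end

section
/- Let u be a classical solution of the free wave equation supported in a light cone. Then the function h(t) := ∫_{ℝⁿ} |u(t,x)|² dx is twice differentiable on ℝ and for every t ∈ ℝ one has h''(t) = 2 ∫_{ℝⁿ} ( |∂ₜu(t,x)|² − ‖∇ₓu(t,x)‖² ) dx. -/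
open MeasureTheory Filter Topology Metric
open scoped RealInnerProductSpace

noncomputable section

namespace WaveAux

theorem fderiv_eq_zero_of_eventually_zero {X Y : Type*} [NormedAddCommGroup X] [NormedSpace ℝ X]
    [NormedAddCommGroup Y] [NormedSpace ℝ Y] {f : X → Y} {x : X}
    (h : ∀ᶠ y in 𝓝 x, f y = (0 : Y)) : fderiv ℝ f x = 0 := by
  have h' : f =ᶠ[𝓝 x] (fun _ => (0 : Y)) := h
  rw [h'.fderiv_eq]
  exact fderiv_const_apply 0

theorem eventually_zero_of_zero_outside {X Y : Type*} [NormedAddCommGroup X] [NormedAddCommGroup Y]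
    {f : X → Y} {R : ℝ} (hf : ∀ y, R ≤ ‖y‖ → f y = 0) {x : X} (hx : R + 1 ≤ ‖x‖) :
    ∀ᶠ y in 𝓝 x, f y = (0 : Y) := by
  filter_upwards [Metric.ball_mem_nhds x one_pos] with y hy
  apply hf
  have : ‖x‖ - ‖y‖ < 1 := lt_of_le_of_lt (norm_sub_norm_le x y) (by rwa [← dist_eq_norm, dist_comm])
  linarith

theorem integral_deriv_eq_zero' {f : ℝ → ℝ} (hf : ContDiff ℝ 1 f) (h2f : HasCompactSupport f) :
    ∫ x, deriv f x = 0 := by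
  have hint : Integrable (deriv f) :=
    (hf.continuous_deriv le_rfl).integrable_of_hasCompactSupport h2f.deriv
  rw [← intervalIntegral.integral_Iic_add_Ioi (b := 0) hint.integrableOn hint.integrableOn,
    h2f.integral_Iic_deriv_eq hf 0, h2f.integral_Ioi_deriv_eq hf 0]
  ring

theorem key_coord {m : ℕ} (i : Fin (m + 1)) (s : ℝ) (y : ∀ j : Fin m, ℝ) :
    (((MeasurableEquiv.toLp 2 (Fin (m+1) → ℝ)).symm).symm (i.insertNth s y) :
      EuclideanSpace ℝ (Fin (m+1)))
      = (((MeasurableEquiv.toLp 2 (Fin (m+1) → ℝ)).symm).symm (i.insertNth 0 y) :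
      EuclideanSpace ℝ (Fin (m+1))) + s • EuclideanSpace.single i 1 := by
  apply PiLp.ext
  intro j
  have hj : ∀ j, (i.insertNth s y : ∀ _ : Fin (m+1), ℝ) j = (i.insertNth (0:ℝ) y : ∀ _ : Fin (m+1), ℝ) j + s * (Pi.single i 1 : ∀ _ : Fin (m+1), ℝ) j := by
    refine Fin.succAboveCases i ?_ ?_
    · simp
    · intro k
      simp [Fin.insertNth_apply_succAbove, Pi.single_eq_of_ne (Fin.succAbove_ne i k)]
  have h1 : ∀ z : ∀ _ : Fin (m+1), ℝ,
      (((MeasurableEquiv.toLp 2 (Fin (m+1) → ℝ)).symm).symm z : EuclideanSpace ℝ (Fin (m+1))) j = z j :=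
    fun z => rfl
  have h2 : (EuclideanSpace.single i (1:ℝ)) j = (Pi.single i 1 : ∀ _ : Fin (m+1), ℝ) j := by
    simp [EuclideanSpace.single_apply, Pi.single_apply]
  simp only [PiLp.add_apply, PiLp.smul_apply, h1, h2, smul_eq_mul]
  exact hj j

theorem integral_pderiv_eq_zero {m : ℕ} {g : EuclideanSpace ℝ (Fin (m+1)) → ℝ}
    (hg : ContDiff ℝ (⊤ : ℕ∞) g) {R : ℝ} (hR : ∀ x, R ≤ ‖x‖ → g x = 0) (i : Fin (m+1)) :
    ∫ x : EuclideanSpace ℝ (Fin (m+1)), fderiv ℝ g x (EuclideanSpace.single i 1) = 0 := by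
  classical
  set F : EuclideanSpace ℝ (Fin (m+1)) → ℝ :=
    fun x => fderiv ℝ g x (EuclideanSpace.single i 1) with hF
  have hgdiff : Differentiable ℝ g := hg.differentiable (by simp)
  have hFc : Continuous F :=
    ((hg.fderiv_right (m := (⊤ : ℕ∞)) (by simp)).clm_apply contDiff_const).continuous
  have hFz : ∀ x, R + 1 ≤ ‖x‖ → F x = 0 := by
    intro x hx
    have := fderiv_eq_zero_of_eventually_zero (eventually_zero_of_zero_outside hR hx)
    simp [hF, this]
  have hFcs : HasCompactSupport F := by
    apply HasCompactSupport.intro (isCompact_closedBall (0 : EuclideanSpace ℝ (Fin (m+1))) (R+1))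
    intro x hx
    have hx' : R + 1 ≤ ‖x‖ := by
      simp only [mem_closedBall, dist_zero_right, not_le] at hx
      exact hx.le
    exact hFz x hx'
  have hFi : Integrable F := hFc.integrable_of_hasCompactSupport hFcs
  -- transport to pi space and then to ℝ × ℝᵐ
  set e1 := (MeasurableEquiv.toLp 2 (Fin (m+1) → ℝ)).symm with he1
  set e2 := MeasurableEquiv.piFinSuccAbove (fun _ : Fin (m+1) => ℝ) i with he2
  have mp1 : MeasurePreserving (⇑e1.symm) volume volume :=
    (EuclideanSpace.volume_preserving_symm_measurableEquiv_toLp (Fin (m+1))).symm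
  have mp2 : MeasurePreserving (⇑e2.symm) volume volume := by
    have h := (measurePreserving_piFinSuccAbove (fun _ : Fin (m+1) => (volume : Measure ℝ)) i).symm
    exact h
  have step1 : ∫ x, F x = ∫ z : ℝ × (∀ _ : Fin m, ℝ), F (e1.symm (e2.symm z)) :=
    ((mp1.integral_comp (e1.symm.measurableEmbedding) F).symm).trans
      (mp2.integral_comp (e2.symm.measurableEmbedding) (fun y => F (e1.symm y))).symm
  have hint1 : Integrable (fun y : Fin (m+1) → ℝ => F (e1.symm y)) :=
    (mp1.integrable_comp_emb (e1.symm.measurableEmbedding)).2 hFi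
  have hint2 : Integrable (fun z : ℝ × (∀ _ : Fin m, ℝ) => F (e1.symm (e2.symm z))) :=
    (mp2.integrable_comp_emb (e2.symm.measurableEmbedding)).2 hint1
  rw [MeasureTheory.Measure.volume_eq_prod] at hint2
  rw [step1, MeasureTheory.Measure.volume_eq_prod, MeasureTheory.integral_prod_symm _ hint2]
  rw [← MeasureTheory.integral_zero (∀ _ : Fin m, ℝ) ℝ]
  congr 1
  funext y
  -- inner integral over the i-th coordinate
  set v : EuclideanSpace ℝ (Fin (m+1)) := EuclideanSpace.single i 1 with hv
  set c : EuclideanSpace ℝ (Fin (m+1)) := e1.symm (i.insertNth 0 y) with hc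
  have hpt : ∀ s : ℝ, (e1.symm (e2.symm (s, y)) : EuclideanSpace ℝ (Fin (m+1))) = c + s • v := by
    intro s
    have : e2.symm (s, y) = i.insertNth s y := by
      simp [he2, MeasurableEquiv.piFinSuccAbove_symm_apply, Fin.insertNthEquiv]
    rw [this, key_coord]
  set φ : ℝ → ℝ := fun s => g (c + s • v) with hφ
  have hline : ∀ s : ℝ, HasDerivAt (fun s' : ℝ => c + s' • v) v s := by
    intro s
    simpa using ((hasDerivAt_id s).smul_const v).const_add c
  have hφd : ∀ s : ℝ, HasDerivAt φ (F (c + s • v)) s := by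
    intro s
    exact (hgdiff (c + s • v)).hasFDerivAt.comp_hasDerivAt s (hline s)
  have hφc : ContDiff ℝ 1 φ := by
    exact (hg.comp (contDiff_const.add (contDiff_id.smul contDiff_const))).of_le (by simp)
  have hnv : ‖v‖ = 1 := by simp [hv]
  have hφcs : HasCompactSupport φ := by
    apply HasCompactSupport.intro (isCompact_Icc (a := -(R + ‖c‖)) (b := R + ‖c‖))
    intro s hs
    apply hR
    have habs : R + ‖c‖ ≤ |s| := by
      rw [Set.mem_Icc, not_and_or] at hs
      rcases le_or_gt (R + ‖c‖) 0 with hneg | hpos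
      · exact hneg.trans (abs_nonneg s)
      · rcases hs with h | h
        · have h' := not_le.1 h
          rw [abs_of_neg (by linarith : s < 0)]; linarith
        · have h' := not_le.1 h
          rw [abs_of_pos (by linarith : 0 < s)]; linarith
    have h2 := norm_add_le (c + s • v) (-c)
    have h3 : (c + s • v) + (-c) = s • v := by abel
    rw [h3, norm_neg, norm_smul, hnv, mul_one, Real.norm_eq_abs] at h2
    linarith
  have : ∫ s : ℝ, F (e1.symm (e2.symm (s, y))) = ∫ s : ℝ, deriv φ s := by
    congr 1
    funext s
    rw [hpt s, (hφd s).deriv]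
  rw [this, integral_deriv_eq_zero' hφc hφcs]

theorem euclid_norm_sq {k : ℕ} (w : EuclideanSpace ℝ (Fin k)) : ‖w‖^2 = ∑ i, (w i)^2 := by
  rw [EuclideanSpace.norm_eq, Real.sq_sqrt (by positivity)]
  simp [sq_abs]

theorem gradient_apply {k : ℕ} {g : EuclideanSpace ℝ (Fin k) → ℝ} (x : EuclideanSpace ℝ (Fin k))
    (i : Fin k) : gradient g x i = fderiv ℝ g x (EuclideanSpace.single i 1) := by
  have h1 : (gradient g x) i = ⟪gradient g x, EuclideanSpace.single i (1:ℝ)⟫ := by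
    rw [EuclideanSpace.inner_single_right]
    simp
  rw [h1, gradient, InnerProductSpace.toDual_symm_apply]

theorem integral_mul_lapl {m : ℕ} {g : EuclideanSpace ℝ (Fin (m+1)) → ℝ}
    (hg : ContDiff ℝ (⊤ : ℕ∞) g) {R : ℝ} (hR : ∀ x, R ≤ ‖x‖ → g x = 0) :
    ∫ x : EuclideanSpace ℝ (Fin (m+1)), g x * lapl g x
      = - ∫ x : EuclideanSpace ℝ (Fin (m+1)), ‖gradient g x‖^2 := by
  classical
  set P : Fin (m+1) → EuclideanSpace ℝ (Fin (m+1)) → ℝ :=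
    fun i x => fderiv ℝ g x (EuclideanSpace.single i 1) with hP
  have hgd : Differentiable ℝ g := hg.differentiable (by simp)
  have hPc : ∀ i, ContDiff ℝ (⊤ : ℕ∞) (P i) :=
    fun i => (hg.fderiv_right (m := (⊤ : ℕ∞)) (by simp)).clm_apply contDiff_const
  have hPz : ∀ i x, R + 1 ≤ ‖x‖ → P i x = 0 := by
    intro i x hx
    have := fderiv_eq_zero_of_eventually_zero (eventually_zero_of_zero_outside hR hx)
    simp [hP, this]
  set Q : Fin (m+1) → EuclideanSpace ℝ (Fin (m+1)) → ℝ :=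
    fun i x => fderiv ℝ (P i) x (EuclideanSpace.single i 1) with hQ
  have hQz : ∀ i x, R + 2 ≤ ‖x‖ → Q i x = 0 := by
    intro i x hx
    have hx' : (R + 1) + 1 ≤ ‖x‖ := by linarith
    have := fderiv_eq_zero_of_eventually_zero
      (eventually_zero_of_zero_outside (fun y hy => hPz i y hy) hx')
    simp [hQ, this]
  have hlapl : ∀ x, lapl g x = ∑ i, Q i x := fun x => rfl
  -- integrands
  set A : Fin (m+1) → EuclideanSpace ℝ (Fin (m+1)) → ℝ := fun i x => g x * Q i x with hA
  set B : Fin (m+1) → EuclideanSpace ℝ (Fin (m+1)) → ℝ := fun i x => P i x * P i x with hB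
  have hQc : ∀ i, Continuous (Q i) :=
    fun i => (((hPc i).fderiv_right (m := (⊤ : ℕ∞)) (by simp)).clm_apply contDiff_const).continuous
  have cs : ∀ (f : EuclideanSpace ℝ (Fin (m+1)) → ℝ), (∀ x, R + 2 ≤ ‖x‖ → f x = 0) →
      HasCompactSupport f := by
    intro f hf
    apply HasCompactSupport.intro (isCompact_closedBall (0 : EuclideanSpace ℝ (Fin (m+1))) (R+2))
    intro x hx
    apply hf
    simp only [mem_closedBall, dist_zero_right, not_le] at hx
    exact hx.le
  have hAint : ∀ i, Integrable (A i) := by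
    intro i
    refine (hg.continuous.mul (hQc i)).integrable_of_hasCompactSupport (cs _ ?_)
    intro x hx
    simp [hA, hR x (by linarith : R ≤ ‖x‖)]
  have hBint : ∀ i, Integrable (B i) := by
    intro i
    refine ((hPc i).continuous.mul (hPc i).continuous).integrable_of_hasCompactSupport (cs _ ?_)
    intro x hx
    simp [hB, hPz i x (by linarith : R + 1 ≤ ‖x‖)]
  have key : ∀ i, ∫ x, A i x = - ∫ x, B i x := by
    intro i
    have hw : ContDiff ℝ (⊤ : ℕ∞) (fun x => g x * P i x) := hg.mul (hPc i)
    have hwz : ∀ x, R + 1 ≤ ‖x‖ → g x * P i x = 0 := by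
      intro x hx
      rw [hR x (by linarith : R ≤ ‖x‖), zero_mul]
    have h0 := integral_pderiv_eq_zero hw hwz i
    have hfd : ∀ x, fderiv ℝ (fun y => g y * P i y) x (EuclideanSpace.single i 1)
        = A i x + B i x := by
      intro x
      rw [fderiv_fun_mul (hgd x) (((hPc i).differentiable (by simp)) x)]
      simp [hA, hB, hQ, hP, mul_comm]
    rw [show (fun x : EuclideanSpace ℝ (Fin (m+1)) =>
        fderiv ℝ (fun y => g y * P i y) x (EuclideanSpace.single i 1))
        = fun x => A i x + B i x from funext hfd] at h0
    rw [integral_add (hAint i) (hBint i)] at h0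
    linarith
  have hsum1 : ∫ x, g x * lapl g x = ∑ i, ∫ x, A i x := by
    rw [← integral_finset_sum _ (fun i _ => hAint i)]
    congr 1
    funext x
    rw [hlapl x, Finset.mul_sum]
  have hsum2 : ∫ x, ‖gradient g x‖^2 = ∑ i, ∫ x, B i x := by
    rw [← integral_finset_sum _ (fun i _ => hBint i)]
    congr 1
    funext x
    rw [euclid_norm_sq]
    refine Finset.sum_congr rfl fun i _ => ?_
    rw [gradient_apply, sq]
  rw [hsum1, hsum2, ← Finset.sum_neg_distrib]
  exact Finset.sum_congr rfl fun i _ => key i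

theorem slice_hasDerivAt {k : ℕ} {f : ℝ × EuclideanSpace ℝ (Fin k) → ℝ} (hf : ContDiff ℝ (⊤ : ℕ∞) f)
    (s : ℝ) (x : EuclideanSpace ℝ (Fin k)) :
    HasDerivAt (fun s' => f (s', x)) (fderiv ℝ f (s, x) (1, 0)) s :=
  (hf.differentiable (by simp) (s, x)).hasFDerivAt.comp_hasDerivAt s
    ((hasDerivAt_id s).prodMk (hasDerivAt_const s x))

theorem prod_vanish_fderiv {k : ℕ} {f : ℝ × EuclideanSpace ℝ (Fin k) → ℝ} {R : ℝ}
    (hz : ∀ s x, R + |s| ≤ ‖x‖ → f (s, x) = 0) :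
    ∀ (s : ℝ) (x : EuclideanSpace ℝ (Fin k)), (R + 1) + |s| ≤ ‖x‖ →
      fderiv ℝ f (s, x) = 0 := by
  intro s x hx
  apply fderiv_eq_zero_of_eventually_zero
  filter_upwards [ball_mem_nhds ((s, x) : ℝ × EuclideanSpace ℝ (Fin k))
    (by norm_num : (0:ℝ) < 1/2)] with p hp
  rw [mem_ball, Prod.dist_eq] at hp
  have h1 : dist p.1 s < 1/2 := lt_of_le_of_lt (le_max_left _ _) hp
  have h2 : dist p.2 x < 1/2 := lt_of_le_of_lt (le_max_right _ _) hp
  rw [Real.dist_eq] at h1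
  have e1 : |p.1| - |s| ≤ |p.1 - s| := abs_sub_abs_le_abs_sub _ _
  have e2 : ‖x‖ - ‖p.2‖ ≤ ‖x - p.2‖ := norm_sub_norm_le _ _
  rw [← dist_eq_norm, dist_comm] at e2
  have : R + |p.1| ≤ ‖p.2‖ := by linarith
  have h0 := hz p.1 p.2 this
  simpa using h0

theorem hasDerivAt_integral {k : ℕ} {G G' : ℝ × EuclideanSpace ℝ (Fin k) → ℝ}
    (hGc : Continuous G) (hG'c : Continuous G') {R : ℝ}
    (hzG : ∀ s x, R + |s| ≤ ‖x‖ → G (s, x) = 0)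
    (hzG' : ∀ s x, R + |s| ≤ ‖x‖ → G' (s, x) = 0)
    (hRnn : 0 ≤ R)
    (hd : ∀ (s : ℝ) x, HasDerivAt (fun s' => G (s', x)) (G' (s, x)) s) (t : ℝ) :
    HasDerivAt (fun s => ∫ x : EuclideanSpace ℝ (Fin k), G (s, x))
      (∫ x : EuclideanSpace ℝ (Fin k), G' (t, x)) t := by
  classical
  set K : Set (ℝ × EuclideanSpace ℝ (Fin k)) :=
    closedBall t 1 ×ˢ closedBall 0 (R + |t| + 1) with hK
  have hKcomp : IsCompact K := (isCompact_closedBall t 1).prod (isCompact_closedBall _ _)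
  obtain ⟨C, hC⟩ := hKcomp.exists_bound_of_continuousOn hG'c.continuousOn
  set bound : EuclideanSpace ℝ (Fin k) → ℝ :=
    (closedBall (0 : EuclideanSpace ℝ (Fin k)) (R + |t| + 1)).indicator (fun _ => C) with hbd
  have hCnn : 0 ≤ C := by
    have := hC (t, 0) (by
      constructor
      · exact mem_closedBall_self zero_le_one
      · exact mem_closedBall_self (by linarith [abs_nonneg t]))
    exact (norm_nonneg _).trans this
  have int_of_slice : ∀ (H : ℝ × EuclideanSpace ℝ (Fin k) → ℝ), Continuous H →
      (∀ s x, R + |s| ≤ ‖x‖ → H (s, x) = 0) → ∀ s : ℝ,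
      Integrable (fun x => H (s, x)) := by
    intro H hHc hHz s
    have hcs : Continuous (fun x : EuclideanSpace ℝ (Fin k) => ((s, x) : ℝ × EuclideanSpace ℝ (Fin k))) :=
      Continuous.prodMk continuous_const continuous_id
    refine (hHc.comp hcs).integrable_of_hasCompactSupport ?_
    apply HasCompactSupport.intro
      (isCompact_closedBall (0 : EuclideanSpace ℝ (Fin k)) (R + |s|))
    intro x hx
    simp only [mem_closedBall, dist_zero_right, not_le] at hx
    exact hHz s x hx.le
  have hslice : ∀ s : ℝ, Continuous (fun x : EuclideanSpace ℝ (Fin k) =>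
      ((s, x) : ℝ × EuclideanSpace ℝ (Fin k))) :=
    fun s => Continuous.prodMk continuous_const continuous_id
  have m1 : ∀ s : ℝ, Continuous (fun x => G (s, x)) := fun s => hGc.comp (hslice s)
  have m2 : ∀ s : ℝ, Continuous (fun x => G' (s, x)) := fun s => hG'c.comp (hslice s)
  refine (hasDerivAt_integral_of_dominated_loc_of_deriv_le (s := ball t 1)
    (F := fun s x => G (s, x)) (F' := fun s x => G' (s, x)) (bound := bound) (ball_mem_nhds t one_pos)
    (Filter.Eventually.of_forall fun s => (m1 s).aestronglyMeasurable)
    (int_of_slice G hGc hzG t)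
    ((m2 t).aestronglyMeasurable)
    (MeasureTheory.ae_of_all _ ?_) ?_ (MeasureTheory.ae_of_all _ ?_)).2
  · -- bound
    intro x s hs
    rw [mem_ball, Real.dist_eq] at hs
    by_cases hx : x ∈ closedBall (0 : EuclideanSpace ℝ (Fin k)) (R + |t| + 1)
    · have hsK : ((s, x) : ℝ × EuclideanSpace ℝ (Fin k)) ∈ K := by
        refine ⟨?_, hx⟩
        rw [mem_closedBall, Real.dist_eq]
        exact (le_of_lt hs)
      have := hC (s, x) hsK
      rwa [hbd, Set.indicator_of_mem hx]
    · have hxn : R + |t| + 1 < ‖x‖ := by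
        simpa [mem_closedBall, dist_zero_right, not_le] using hx
      have hsb : |s| ≤ |t| + 1 := by
        have : |s| - |t| ≤ |s - t| := abs_sub_abs_le_abs_sub _ _
        linarith
      have hz : G' (s, x) = 0 := hzG' s x (by linarith)
      rw [hbd, Set.indicator_of_notMem hx]
      simp only [norm_le_zero_iff]
      exact hz
  · -- bound integrable
    rw [hbd]
    rw [integrable_indicator_iff measurableSet_closedBall]
    exact integrableOn_const measure_closedBall_lt_top.ne
  · -- differentiability
    intro x s _
    exact hd s x

theorem integrable_slice {k : ℕ} {H : ℝ × EuclideanSpace ℝ (Fin k) → ℝ} (hHc : Continuous H)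
    {R : ℝ} (hHz : ∀ s x, R + |s| ≤ ‖x‖ → H (s, x) = 0) (s : ℝ) :
    Integrable (fun x => H (s, x)) := by
  have hcs : Continuous (fun x : EuclideanSpace ℝ (Fin k) =>
      ((s, x) : ℝ × EuclideanSpace ℝ (Fin k))) :=
    Continuous.prodMk continuous_const continuous_id
  refine (hHc.comp hcs).integrable_of_hasCompactSupport ?_
  apply HasCompactSupport.intro
    (isCompact_closedBall (0 : EuclideanSpace ℝ (Fin k)) (R + |s|))
  intro x hx
  simp only [mem_closedBall, dist_zero_right, not_le] at hx
  exact hHz s x hx.le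

end WaveAux

/-- Second derivative of the `L²` mass of a free wave supported in a light cone. -/
theorem second_derivative_of_mass {n : ℕ} (hn : 3 ≤ n)
    (u : ℝ × EuclideanSpace ℝ (Fin n) → ℝ)
    (hu : IsFreeWave u) (hcone : InLightCone u) :
    ∃ h' : ℝ → ℝ,
      (∀ t : ℝ, HasDerivAt (fun s => ∫ x : EuclideanSpace ℝ (Fin n), (u (s, x))^2)
        (h' t) t) ∧
      (∀ t : ℝ, HasDerivAt h'
        (2 * ∫ x : EuclideanSpace ℝ (Fin n), ((dtu u t x)^2 - ‖gradx u t x‖^2)) t) := by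
  obtain ⟨m, rfl⟩ : ∃ m, n = m + 1 := ⟨n - 1, by omega⟩
  obtain ⟨R₀, hR₀, z0⟩ := hcone
  obtain ⟨husm, hweq⟩ := hu
  set U1 : ℝ × EuclideanSpace ℝ (Fin (m+1)) → ℝ := fun p => fderiv ℝ u p (1, 0) with hU1def
  have hU1sm : ContDiff ℝ (⊤ : ℕ∞) U1 := (husm.fderiv_right (m := (⊤ : ℕ∞)) (by simp)).clm_apply contDiff_const
  have hd_u : ∀ (s : ℝ) x, HasDerivAt (fun s' => u (s', x)) (U1 (s, x)) s :=
    fun s x => WaveAux.slice_hasDerivAt husm s x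
  have hdtu : ∀ (s : ℝ) x, dtu u s x = U1 (s, x) := fun s x => (hd_u s x).deriv
  set U2 : ℝ × EuclideanSpace ℝ (Fin (m+1)) → ℝ := fun p => fderiv ℝ U1 p (1, 0) with hU2def
  have hU2sm : ContDiff ℝ (⊤ : ℕ∞) U2 := (hU1sm.fderiv_right (m := (⊤ : ℕ∞)) (by simp)).clm_apply contDiff_const
  have hd_U1 : ∀ (s : ℝ) x, HasDerivAt (fun s' => U1 (s', x)) (U2 (s, x)) s :=
    fun s x => WaveAux.slice_hasDerivAt hU1sm s x
  have hdttu : ∀ (s : ℝ) x, dttu u s x = U2 (s, x) := by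
    intro s x
    have he : (fun s' => dtu u s' x) = fun s' => U1 (s', x) := funext fun s' => hdtu s' x
    rw [dttu, he]
    exact (hd_U1 s x).deriv
  have z1 : ∀ (s : ℝ) x, (R₀ + 1) + |s| ≤ ‖x‖ → U1 (s, x) = 0 := by
    intro s x hx
    have h := WaveAux.prod_vanish_fderiv z0 s x hx
    simp only [hU1def, h]
    rfl
  have z2 : ∀ (s : ℝ) x, (R₀ + 2) + |s| ≤ ‖x‖ → U2 (s, x) = 0 := by
    intro s x hx
    have h := WaveAux.prod_vanish_fderiv z1 s x (by linarith)
    simp only [hU2def, h]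
    rfl
  refine ⟨fun t => ∫ x : EuclideanSpace ℝ (Fin (m+1)), 2 * (u (t, x) * U1 (t, x)), ?_, ?_⟩
  · -- first derivative
    intro t
    have hG'c : Continuous (fun p : ℝ × EuclideanSpace ℝ (Fin (m+1)) => 2 * (u p * U1 p)) :=
      continuous_const.mul (husm.continuous.mul hU1sm.continuous)
    refine WaveAux.hasDerivAt_integral (R := R₀ + 1) (husm.continuous.pow 2) hG'c ?_ ?_
      (by linarith) ?_ t
    · intro s x hx
      rw [Pi.pow_apply, z0 s x (by linarith)]
      ring
    · intro s x hx
      rw [z0 s x (by linarith), z1 s x hx]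
      ring
    · intro s x
      have h := (hd_u s x).fun_pow 2
      show HasDerivAt (fun s' => u (s', x) ^ 2) _ s
      refine h.congr_deriv ?_
      push_cast
      ring
  · -- second derivative
    intro t
    have hGc : Continuous (fun p : ℝ × EuclideanSpace ℝ (Fin (m+1)) => 2 * (u p * U1 p)) :=
      continuous_const.mul (husm.continuous.mul hU1sm.continuous)
    have hG'c : Continuous (fun p : ℝ × EuclideanSpace ℝ (Fin (m+1)) =>
        2 * (U1 p * U1 p + u p * U2 p)) :=
      continuous_const.mul ((hU1sm.continuous.mul hU1sm.continuous).add
        (husm.continuous.mul hU2sm.continuous))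
    have hder := WaveAux.hasDerivAt_integral (R := R₀ + 2) hGc hG'c
      (by intro s x hx; rw [z0 s x (by linarith)]; ring)
      (by intro s x hx; rw [z0 s x (by linarith), z1 s x (by linarith), z2 s x hx]; ring)
      (by linarith)
      (fun s x => ((hd_u s x).mul (hd_U1 s x)).const_mul 2) t
    convert hder using 1
    -- value identification
    have hg : ContDiff ℝ (⊤ : ℕ∞) (fun y => u (t, y)) :=
      husm.comp (contDiff_const.prodMk contDiff_id)
    have hgz : ∀ y : EuclideanSpace ℝ (Fin (m+1)), R₀ + |t| ≤ ‖y‖ → u (t, y) = 0 :=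
      fun y hy => z0 t y hy
    have i1 : Integrable (fun x : EuclideanSpace ℝ (Fin (m+1)) => U1 (t, x) * U1 (t, x)) :=
      WaveAux.integrable_slice (hU1sm.continuous.mul hU1sm.continuous)
        (R := R₀ + 1) (fun s x hx => by rw [Pi.mul_apply, z1 s x hx]; ring) t
    have i1' : Integrable (fun x : EuclideanSpace ℝ (Fin (m+1)) => U1 (t, x) ^ 2) := by
      have : (fun x : EuclideanSpace ℝ (Fin (m+1)) => U1 (t, x) ^ 2)
          = fun x => U1 (t, x) * U1 (t, x) := by funext x; rw [pow_two]
      rw [this]; exact i1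
    have i2 : Integrable (fun x : EuclideanSpace ℝ (Fin (m+1)) => u (t, x) * U2 (t, x)) :=
      WaveAux.integrable_slice (husm.continuous.mul hU2sm.continuous)
        (R := R₀ + 2) (fun s x hx => by rw [Pi.mul_apply, z0 s x (by linarith)]; ring) t
    have hgradc : Continuous (fun x : EuclideanSpace ℝ (Fin (m+1)) =>
        gradient (fun y => u (t, y)) x) := by
      have h1 : Continuous (fun x : EuclideanSpace ℝ (Fin (m+1)) =>
          fderiv ℝ (fun y => u (t, y)) x) := (hg.fderiv_right (m := (⊤ : ℕ∞)) (by simp)).continuous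
      exact (InnerProductSpace.toDual ℝ (EuclideanSpace ℝ (Fin (m+1)))).symm.continuous.comp h1
    have hgradz : ∀ x : EuclideanSpace ℝ (Fin (m+1)), (R₀ + |t|) + 1 ≤ ‖x‖ →
        gradient (fun y => u (t, y)) x = 0 := by
      intro x hx
      have h := WaveAux.fderiv_eq_zero_of_eventually_zero
        (WaveAux.eventually_zero_of_zero_outside hgz hx)
      rw [gradient, h, map_zero]
    have i3 : Integrable (fun x : EuclideanSpace ℝ (Fin (m+1)) =>
        ‖gradient (fun y => u (t, y)) x‖ ^ 2) := by
      refine ((hgradc.norm).pow 2).integrable_of_hasCompactSupport ?_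
      apply HasCompactSupport.intro
        (isCompact_closedBall (0 : EuclideanSpace ℝ (Fin (m+1))) ((R₀ + |t|) + 1))
      intro x hx
      simp only [mem_closedBall, dist_zero_right, not_le] at hx
      simp only [Pi.pow_apply]
      rw [hgradz x hx.le]
      simp
    have e0 : (fun x : EuclideanSpace ℝ (Fin (m+1)) => 2 * (U1 (t, x) * U1 (t, x) + u (t, x) * U2 (t, x)))
        = fun x => 2 * (U1 (t, x) ^ 2 + u (t, x) * lapl (fun y => u (t, y)) x) := by
      funext x
      rw [pow_two, ← hweq t x, hdttu t x]
    have e3 : ∫ x : EuclideanSpace ℝ (Fin (m+1)), u (t, x) * lapl (fun y => u (t, y)) x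
        = - ∫ x : EuclideanSpace ℝ (Fin (m+1)), ‖gradient (fun y => u (t, y)) x‖ ^ 2 :=
      WaveAux.integral_mul_lapl hg hgz
    have i2' : Integrable (fun x : EuclideanSpace ℝ (Fin (m+1)) =>
        u (t, x) * lapl (fun y => u (t, y)) x) := by
      have : (fun x : EuclideanSpace ℝ (Fin (m+1)) => u (t, x) * lapl (fun y => u (t, y)) x)
          = fun x => u (t, x) * U2 (t, x) := by
        funext x; rw [← hweq t x, hdttu t x]
      rw [this]; exact i2
    have efin : (fun x : EuclideanSpace ℝ (Fin (m+1)) => (dtu u t x)^2 - ‖gradx u t x‖^2)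
        = fun x => U1 (t, x) ^ 2 - ‖gradient (fun y => u (t, y)) x‖ ^ 2 := by
      funext x
      rw [hdtu t x]
      rfl
    rw [efin, e0, MeasureTheory.integral_const_mul, integral_add i1' i2', e3,
      integral_sub i1' i3]
    ring
end
end

section
/- Let E and F be real Banach spaces, let S : [0,∞) → (E →L[ℝ] F) be a family of continuous linear operators, let ε₀ > 0 be such that the operator norm satisfies ‖S(t)‖ ≥ ε₀ for every t ≥ 0, and let γ : [0,∞) → [0,∞) with γ(t) → ∞ as t → ∞. Assume that for every g ∈ E and every T > 0 one has sup_{t ∈ [0,T]} γ(t) ‖S(t) g‖ < ∞. Then there exists g ∈ E such that limsup_{t→∞} γ(t) ‖S(t) g‖ = ∞, i.e. for every M > 0 and every T > 0 there exists t > T with γ(t) ‖S(t) g‖ > M. -/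
open Filter Topology

/-- The uniform-boundedness (Banach–Steinhaus) argument underlying the nonexistence of
a universal decay rate: if a family of operators `S t` has operator norms bounded below
by `ε₀ > 0` and `γ(t) → ∞`, while `t ↦ γ(t) ‖S(t) g‖` is bounded on compact intervals
for each `g`, then some `g` has `limsup_{t→∞} γ(t) ‖S(t) g‖ = ∞`. -/
theorem no_uniform_decay_rate {E F : Type*}
    [NormedAddCommGroup E] [NormedSpace ℝ E] [CompleteSpace E]
    [NormedAddCommGroup F] [NormedSpace ℝ F] [CompleteSpace F]
    (S : ℝ → E →L[ℝ] F) (ε₀ : ℝ) (hε₀ : 0 < ε₀)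
    (hbelow : ∀ t : ℝ, 0 ≤ t → ε₀ ≤ ‖S t‖)
    (γ : ℝ → ℝ) (hγ0 : ∀ t : ℝ, 0 ≤ t → 0 ≤ γ t)
    (hγ : Tendsto γ atTop atTop)
    (hloc : ∀ g : E, ∀ T : ℝ, 0 < T → ∃ C : ℝ, ∀ t ∈ Set.Icc (0 : ℝ) T,
      γ t * ‖S t g‖ ≤ C) :
    ∃ g : E, ∀ M : ℝ, 0 < M → ∀ T : ℝ, 0 < T → ∃ t : ℝ, T < t ∧ M < γ t * ‖S t g‖ := by
  by_contra h
  push_neg at h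
  -- family of operators indexed by nonnegative times
  set A : {t : ℝ // 0 ≤ t} → E →L[ℝ] F := fun t => γ t.1 • S t.1 with hA
  -- pointwise bound
  have hpt : ∀ g : E, ∃ C : ℝ, ∀ i, ‖A i g‖ ≤ C := by
    intro g
    obtain ⟨M, hM, T, hT, hMT⟩ := h g
    obtain ⟨C, hC⟩ := hloc g T hT
    refine ⟨max C M, ?_⟩
    rintro ⟨t, ht⟩
    have hnorm : ‖A ⟨t, ht⟩ g‖ = γ t * ‖S t g‖ := by
      simp [hA, norm_smul, abs_of_nonneg (hγ0 t ht)]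
    rw [hnorm]
    rcases le_or_gt t T with h1 | h1
    · exact le_trans (hC t ⟨ht, h1⟩) (le_max_left _ _)
    · exact le_trans (hMT t h1) (le_max_right _ _)
  obtain ⟨C', hC'⟩ := banach_steinhaus hpt
  -- choose t with γ t large
  obtain ⟨t, ht⟩ := ((hγ.eventually_ge_atTop ((C' + 1) / ε₀)).and
    (eventually_ge_atTop (0 : ℝ))).exists
  have hAt : ‖A ⟨t, ht.2⟩‖ = γ t * ‖S t‖ := by
    show ‖γ t • S t‖ = γ t * ‖S t‖
    exact (norm_smul (γ t) (S t)).trans (by rw [Real.norm_of_nonneg (hγ0 t ht.2)])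
  have h1 : (C' + 1) / ε₀ * ε₀ ≤ γ t * ‖S t‖ :=
    mul_le_mul ht.1 (hbelow t ht.2) hε₀.le
      (le_trans (div_nonneg (by nlinarith [hC' ⟨t, ht.2⟩, norm_nonneg (A ⟨t, ht.2⟩)]) hε₀.le) ht.1)
  rw [div_mul_cancel₀ _ hε₀.ne'] at h1
  have h2 := hC' ⟨t, ht.2⟩
  rw [hAt] at h2
  linarith
end
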